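/- arXiv:0712.0192 — 6 statements merged into one kernel-verified Lean document; each statement's English description precedes it below -/
import Mathlib

section
/- Let G be an infinite, locally finite graph with minimal degree at least 2 and bounded degrees, and suppose G contains an infinite non-backtracking ray of directed edges e_0, e_1, e_2, .... Then 1 lies in the spectrum of B: the functions f_k = sum_{i=1}^{k} delta_{e_i} - sum_{i=0}^{k-1} delta_{e_i^{-1}} satisfy ||(B - I) f_k|| = 2 while ||f_k|| = sqrt(2k), so f_k / ||f_k|| form approximate eigenfunctions for eigenvalue 1. -/
/-!
If the edges `a` and `b` leave the same vertex, then `B (δ_a - δ_b) = δ_{b⁻¹} - δ_{a⁻¹}`: every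
edge entering that vertex follows both `a` and `b`, except `a⁻¹` and `b⁻¹`. Writing
`f_k = ∑_{i<k} (δ_{e_{i+1}} - δ_{e_i⁻¹})`, this makes `(B - 1) f_k` telescope to
`δ_{e_0} + δ_{e_0⁻¹} - δ_{e_k} - δ_{e_k⁻¹}`, of norm `2`, while `‖f_k‖ = √(2k)` because all these
edges are distinct along a simple ray. So `B - 1` is not bounded below, and `1 ∈ σ(B)`.
-/

open Finset
open scoped ENNReal

section lpSingle

variable {α F : Type*} [DecidableEq α] [NormedAddCommGroup F]

lemma tsum_subtype_lp_single_apply (p : ℝ≥0∞) (P : α → Prop) [DecidablePred P] (a : α)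
    (c : F) :
    ∑' e : {e // P e}, (lp.single p a c : lp (fun _ : α => F) p) e = if P a then c else 0 := by
  split_ifs with h
  · rw [tsum_eq_single ⟨a, h⟩ fun e he =>
      lp.single_apply_ne (E := fun _ : α => F) p a c fun hea => he (Subtype.ext hea)]
    exact lp.single_apply_self (E := fun _ : α => F) p a c
  · refine (tsum_congr fun e : {e // P e} => ?_).trans tsum_zero
    exact lp.single_apply_ne (E := fun _ : α => F) p a c fun hea => h (hea ▸ e.2)

lemma norm_sum_lp_single_sub_sum_lp_single {s t : Finset α} (hst : Disjoint s t) {v : F}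
    (hv : ‖v‖ = 1) :
    ‖(∑ e ∈ s, lp.single 2 e v) - ∑ e ∈ t, (lp.single 2 e v : lp (fun _ : α => F) 2)‖ =
      √(#s + #t) := by
  set c : α → F := fun e => if e ∈ s then v else -v
  have hsum : (∑ e ∈ s, lp.single 2 e v) - ∑ e ∈ t, (lp.single 2 e v : lp (fun _ : α => F) 2) =
      ∑ e ∈ s ∪ t, lp.single 2 e (c e) := by
    have hs : ∀ e ∈ s, lp.single 2 e (c e) = (lp.single 2 e v : lp (fun _ : α => F) 2) :=
      fun e he => by simp only [c, if_pos he]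
    have ht : ∀ e ∈ t, lp.single 2 e (c e) = -(lp.single 2 e v : lp (fun _ : α => F) 2) :=
      fun e he => by simp only [c, if_neg (disjoint_right.mp hst he), lp.single_neg]
    rw [sum_union hst, sum_congr rfl hs, sum_congr rfl ht, sum_neg_distrib, sub_eq_add_neg]
  have hsq := lp.norm_sum_single (p := 2) (by norm_num) c (s ∪ t)
  have hc : ∀ e, ‖c e‖ = 1 := fun e => by simp only [c]; split_ifs <;> simp [hv]
  simp only [ENNReal.toReal_ofNat, Real.rpow_two, hc, one_pow, sum_const, nsmul_eq_mul,
    mul_one, card_union_of_disjoint hst, Nat.cast_add] at hsq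
  rw [hsum, ← hsq, Real.sqrt_sq (norm_nonneg _)]

end lpSingle

lemma mem_spectrum_of_forall_exists_mul_norm_lt {𝕜 X : Type*} [NontriviallyNormedField 𝕜]
    [NormedAddCommGroup X] [NormedSpace 𝕜 X] (T : X →L[𝕜] X) (c : 𝕜)
    (h : ∀ M : ℝ, ∃ x, M * ‖(T - algebraMap 𝕜 _ c) x‖ < ‖x‖) : c ∈ spectrum 𝕜 T := by
  rw [spectrum.mem_iff, ← neg_sub, IsUnit.neg_iff]
  rintro ⟨u, hu⟩
  obtain ⟨x, hx⟩ := h ‖(↑u⁻¹ : X →L[𝕜] X)‖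
  have hx_eq : (↑u⁻¹ : X →L[𝕜] X) ((u : X →L[𝕜] X) x) = x := by
    change (↑u⁻¹ * ↑u : X →L[𝕜] X) x = x
    rw [u.inv_mul, one_apply_eq_self]
  have := (↑u⁻¹ : X →L[𝕜] X).le_opNorm ((u : X →L[𝕜] X) x)
  rw [hx_eq, hu] at this
  linarith

section NonBacktracking

variable {V E : Type*} {tail head : E → V} {inv : E → E} {follows : E → E → Prop} {ray : ℕ → E}

lemma tail_ray_succ (hfollows : ∀ e e', follows e e' ↔ head e = tail e' ∧ e' ≠ inv e)
    (hray : ∀ i, follows (ray i) (ray (i + 1))) (i : ℕ) :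
    tail (ray (i + 1)) = head (ray i) :=
  ((hfollows _ _).1 (hray i)).1.symm

lemma ray_ne_inv_ray (htail_inv : ∀ e, tail (inv e) = head e)
    (hfollows : ∀ e e', follows e e' ↔ head e = tail e' ∧ e' ≠ inv e)
    (hray : ∀ i, follows (ray i) (ray (i + 1)))
    (hray_inj : Function.Injective fun i => tail (ray i)) (i j : ℕ) :
    ray i ≠ inv (ray j) := by
  intro h
  obtain rfl : i = j + 1 := hray_inj <| by
    simp only [h, htail_inv, tail_ray_succ hfollows hray]
  exact ((hfollows _ _).1 (hray j)).2 h

variable [DecidableEq E]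

local notation:max "δ" e:max => (lp.single 2 e (1 : ℂ) : lp (fun _ : E => ℂ) 2)

lemma nonbacktracking_apply_single_sub_single (hinv_inv : ∀ e, inv (inv e) = e)
    (htail_inv : ∀ e, tail (inv e) = head e)
    (hfollows : ∀ e e', follows e e' ↔ head e = tail e' ∧ e' ≠ inv e)
    (B : lp (fun _ : E => ℂ) 2 →L[ℂ] lp (fun _ : E => ℂ) 2)
    (hB : ∀ f e, B f e = ∑' e' : {e' : E // follows e e'}, f e') {a b : E}
    (hab : tail a = tail b) :
    B (δ a - δ b) = δ (inv b) - δ (inv a) := by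
  classical
  have hinv : Function.Involutive inv := hinv_inv
  have hhead_inv : ∀ e, head (inv e) = tail e := fun e => by
    rw [← htail_inv, hinv_inv]
  refine lp.ext (funext fun e => ?_)
  rw [map_sub, lp.coeFn_sub, Pi.sub_apply, hB, hB, tsum_subtype_lp_single_apply,
    tsum_subtype_lp_single_apply, lp.coeFn_sub, Pi.sub_apply, lp.single_apply, lp.single_apply]
  have hflip : ∀ c, c = inv e ↔ e = inv c := fun c => eq_comm.trans hinv.eq_iff
  simp only [hfollows, ← hab, ne_eq, hflip, Pi.single_apply]
  by_cases he : head e = tail a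
  · simp only [he, true_and]
    split_ifs <;> norm_num
  · have hne : ∀ c, tail c = tail a → e ≠ inv c := fun c hc hec => he (by rw [hec, hhead_inv, hc])
    simp [he, hne a rfl, hne b hab.symm]

variable (inv ray) in
noncomputable def rayVector (k : ℕ) : lp (fun _ : E => ℂ) 2 :=
  (∑ i ∈ Icc 1 k, δ (ray i)) - ∑ i ∈ range k, δ (inv (ray i))

lemma rayVector_eq_sum_range (k : ℕ) :
    rayVector inv ray k = ∑ i ∈ range k, (δ (ray (i + 1)) - δ (inv (ray i))) := by
  rw [rayVector, sum_sub_distrib, ← Ico_add_one_right_eq_Icc, sum_Ico_eq_sum_range]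
  simp only [add_tsub_cancel_right, add_comm 1]

lemma norm_rayVector (hinv_inv : ∀ e, inv (inv e) = e) (htail_inv : ∀ e, tail (inv e) = head e)
    (hfollows : ∀ e e', follows e e' ↔ head e = tail e' ∧ e' ≠ inv e)
    (hray : ∀ i, follows (ray i) (ray (i + 1)))
    (hray_inj : Function.Injective fun i => tail (ray i)) (k : ℕ) :
    ‖rayVector inv ray k‖ = √(2 * k) := by
  have hray_injective : Function.Injective ray := hray_inj.of_comp
  have hinv_ray_injective : Function.Injective (inv ∘ ray) :=
    (Function.LeftInverse.injective hinv_inv).comp hray_injective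
  have hdisj : Disjoint ((Icc 1 k).image ray) ((range k).image (inv ∘ ray)) := by
    simp only [disjoint_left, mem_image]
    rintro _ ⟨i, -, rfl⟩ ⟨j, -, hj⟩
    exact ray_ne_inv_ray htail_inv hfollows hray hray_inj i j hj.symm
  have hsum_ray : ∑ i ∈ Icc 1 k, δ (ray i) = ∑ e ∈ (Icc 1 k).image ray, δ e :=
    (sum_image (f := fun e => δ e) hray_injective.injOn).symm
  have hsum_inv : ∑ i ∈ range k, δ (inv (ray i)) = ∑ e ∈ (range k).image (inv ∘ ray), δ e :=
    (sum_image (f := fun e => δ e) hinv_ray_injective.injOn).symm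
  rw [rayVector, hsum_ray, hsum_inv, norm_sum_lp_single_sub_sum_lp_single hdisj norm_one,
    card_image_of_injective _ hray_injective, card_image_of_injective _ hinv_ray_injective,
    Nat.card_Icc, card_range]
  push_cast
  ring_nf

lemma sub_one_apply_rayVector (hinv_inv : ∀ e, inv (inv e) = e)
    (htail_inv : ∀ e, tail (inv e) = head e)
    (hfollows : ∀ e e', follows e e' ↔ head e = tail e' ∧ e' ≠ inv e)
    (B : lp (fun _ : E => ℂ) 2 →L[ℂ] lp (fun _ : E => ℂ) 2)
    (hB : ∀ f e, B f e = ∑' e' : {e' : E // follows e e'}, f e')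
    (hray : ∀ i, follows (ray i) (ray (i + 1))) (k : ℕ) :
    (B - 1) (rayVector inv ray k) =
      (δ (ray 0) + δ (inv (ray 0))) - (δ (ray k) + δ (inv (ray k))) := by
  have hturn : ∀ i, B (δ (ray (i + 1)) - δ (inv (ray i))) = δ (ray i) - δ (inv (ray (i + 1))) :=
    fun i => by
      rw [nonbacktracking_apply_single_sub_single hinv_inv htail_inv hfollows B hB
        ((tail_ray_succ hfollows hray i).trans (htail_inv _).symm), hinv_inv]
  rw [rayVector_eq_sum_range, sub_apply, map_sum, sum_congr rfl fun i _ => hturn i,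
    one_apply_eq_self, ← sum_sub_distrib, ← sum_range_sub' (fun i => δ (ray i) + δ (inv (ray i)))]
  exact sum_congr rfl fun i _ => by abel

lemma norm_sub_one_apply_rayVector (hinv_inv : ∀ e, inv (inv e) = e)
    (htail_inv : ∀ e, tail (inv e) = head e)
    (hfollows : ∀ e e', follows e e' ↔ head e = tail e' ∧ e' ≠ inv e)
    (B : lp (fun _ : E => ℂ) 2 →L[ℂ] lp (fun _ : E => ℂ) 2)
    (hB : ∀ f e, B f e = ∑' e' : {e' : E // follows e e'}, f e')
    (hray : ∀ i, follows (ray i) (ray (i + 1)))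
    (hray_inj : Function.Injective fun i => tail (ray i)) {k : ℕ} (hk : k ≠ 0) :
    ‖(B - 1) (rayVector inv ray k)‖ = 2 := by
  have hne := ray_ne_inv_ray htail_inv hfollows hray hray_inj
  have hray_ne : ray 0 ≠ ray k := hray_inj.of_comp.ne hk.symm
  have hinv_ne : inv (ray 0) ≠ inv (ray k) :=
    (Function.LeftInverse.injective hinv_inv).ne hray_ne
  have hdisj : Disjoint ({ray 0, inv (ray 0)} : Finset E) {ray k, inv (ray k)} := by
    simp [hray_ne.symm, hinv_ne.symm, hne, (hne _ _).symm]
  rw [sub_one_apply_rayVector hinv_inv htail_inv hfollows B hB hray,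
    ← sum_pair (f := fun e => δ e) (hne 0 0), ← sum_pair (f := fun e => δ e) (hne k k),
    norm_sum_lp_single_sub_sum_lp_single hdisj norm_one,
    card_pair (hne 0 0), card_pair (hne k k),
    show ((2 : ℕ) : ℝ) + (2 : ℕ) = 2 ^ 2 by norm_num, Real.sqrt_sq zero_le_two]

end NonBacktracking

theorem one_mem_spectrum_nonbacktracking_general
    {V E : Type} (tail head : E → V) (inv : E → E)
    (hinv_inv : ∀ e, inv (inv e) = e)
    (htail_inv : ∀ e, tail (inv e) = head e)
    (follows : E → E → Prop)
    (hfollows : ∀ e e', follows e e' ↔ head e = tail e' ∧ e' ≠ inv e)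
    [DecidableEq E]
    (B : lp (fun _ : E => ℂ) 2 →L[ℂ] lp (fun _ : E => ℂ) 2)
    (hB : ∀ f e, B f e = ∑' e' : {e' : E // follows e e'}, f e')
    -- an infinite non-backtracking ray (a simple ray: the tails are pairwise distinct)
    (ray : ℕ → E)
    (hray : ∀ i, follows (ray i) (ray (i + 1)))
    (hray_inj : Function.Injective fun i => tail (ray i)) :
    (∀ k : ℕ, 1 ≤ k →
      ‖(B - 1) ((∑ i ∈ Finset.Icc 1 k, lp.single 2 (ray i) (1 : ℂ)) -
          ∑ i ∈ Finset.range k, lp.single 2 (inv (ray i)) (1 : ℂ))‖ = 2 ∧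
      ‖((∑ i ∈ Finset.Icc 1 k, lp.single 2 (ray i) (1 : ℂ)) -
          ∑ i ∈ Finset.range k, lp.single 2 (inv (ray i)) (1 : ℂ) :
          lp (fun _ : E => ℂ) 2)‖ =
        Real.sqrt (2 * k)) ∧
    (1 : ℂ) ∈ spectrum ℂ B := by
  have hvec : ∀ k : ℕ, 1 ≤ k →
      ‖(B - 1) (rayVector inv ray k)‖ = 2 ∧ ‖rayVector inv ray k‖ = √(2 * k) := fun k hk =>
    ⟨norm_sub_one_apply_rayVector hinv_inv htail_inv hfollows B hB hray hray_inj
        (Nat.one_le_iff_ne_zero.mp hk),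
      norm_rayVector hinv_inv htail_inv hfollows hray hray_inj k⟩
  refine ⟨hvec, mem_spectrum_of_forall_exists_mul_norm_lt B 1 fun M => ?_⟩
  obtain ⟨n, hn⟩ := exists_nat_gt ((2 * M) ^ 2)
  obtain ⟨hBf, hf⟩ := hvec (n + 1) (Nat.le_add_left 1 n)
  refine ⟨rayVector inv ray (n + 1), ?_⟩
  rw [map_one, hBf, hf]
  exact Real.lt_sqrt_of_sq_lt (by push_cast; nlinarith)

/-- For an infinite, locally finite graph with minimal degree at least 2,
bounded degrees, containing an infinite non-backtracking ray `e₀, e₁, …`, the number `1`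
lies in the spectrum of the non-backtracking operator `B`: the functions
`f k = ∑_{i=1}^{k} δ_{e i} - ∑_{i=0}^{k-1} δ_{(e i)⁻¹}` satisfy `‖(B - I) (f k)‖ = 2`
while `‖f k‖ = √(2k)`, so they are approximate eigenfunctions for eigenvalue `1`. -/
theorem one_mem_spectrum_nonbacktracking
    {V E : Type} (tail head : E → V) (inv : E → E)
    (hinv_inv : ∀ e, inv (inv e) = e)
    (hinv_ne : ∀ e, inv e ≠ e)
    (htail_inv : ∀ e, tail (inv e) = head e)
    (follows : E → E → Prop)
    (hfollows : ∀ e e', follows e e' ↔ head e = tail e' ∧ e' ≠ inv e)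
    (hinfinite : Infinite V) [DecidableEq E]
    (dmax : ℕ)
    (hdeg : ∀ v : V, 2 ≤ Nat.card {e : E // tail e = v} ∧
      Nat.card {e : E // tail e = v} ≤ dmax)
    (B : lp (fun _ : E => ℂ) 2 →L[ℂ] lp (fun _ : E => ℂ) 2)
    (hB : ∀ f e, B f e = ∑' e' : {e' : E // follows e e'}, f e')
    -- an infinite non-backtracking ray (a simple ray: the tails are pairwise distinct)
    (ray : ℕ → E)
    (hray : ∀ i, follows (ray i) (ray (i + 1)))
    (hray_inj : Function.Injective fun i => tail (ray i)) :
    (∀ k : ℕ, 1 ≤ k →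
      ‖(B - 1) ((∑ i ∈ Finset.Icc 1 k, lp.single 2 (ray i) (1 : ℂ)) -
          ∑ i ∈ Finset.range k, lp.single 2 (inv (ray i)) (1 : ℂ))‖ = 2 ∧
      ‖((∑ i ∈ Finset.Icc 1 k, lp.single 2 (ray i) (1 : ℂ)) -
          ∑ i ∈ Finset.range k, lp.single 2 (inv (ray i)) (1 : ℂ) :
          lp (fun _ : E => ℂ) 2)‖ =
        Real.sqrt (2 * k)) ∧
    (1 : ℂ) ∈ spectrum ℂ B :=
  one_mem_spectrum_nonbacktracking_general tail head inv hinv_inv htail_inv follows hfollows B hB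
    ray hray hray_inj
end

section
/- Let G be a graph with minimal degree at least 2 and maximal degree d_max. For every nonzero f in l^2 of the directed edges, ||Bf|| / ||f|| lies in the interval [1, d_max - 1]. Consequently the spectrum of B is contained in the annulus {lambda in C : 1 <= |lambda| <= d_max - 1}. -/
/-!
Let `d_v` be the number of edges leaving `v`. Since `head e = tail (inv e)`, the map
`f ↦ (Bf) ∘ inv` acts on the edges leaving `v` as `J - I`, with `J` the all-ones matrix. On such a
block `‖(J - I)x‖² = (d_v - 2)‖Σ x‖² + ‖x‖²` and `‖Σ x‖² ≤ d_v ‖x‖²`, so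
`‖x‖ ≤ ‖(J - I)x‖ ≤ (d_v - 1)‖x‖` once `d_v ≥ 2`; summing over the vertices gives
`‖f‖ ≤ ‖Bf‖ ≤ (d_max - 1)‖f‖`. The block inverse `J / (d_v - 1) - I` shows that `B` is onto, so `B`
is invertible with `‖B⁻¹‖ ≤ 1` and `‖B‖ ≤ d_max - 1`, which confines the spectrum to the annulus.
-/

open Finset
open scoped RealInnerProductSpace

section Block

variable {F ι : Type*} [NormedAddCommGroup F] [InnerProductSpace ℝ F] [Fintype ι]

theorem sum_norm_sum_sub_sq (x : ι → F) :
    ∑ i, ‖∑ j, x j - x i‖ ^ 2 = (Fintype.card ι - 2) * ‖∑ j, x j‖ ^ 2 + ∑ i, ‖x i‖ ^ 2 := by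
  have hinner : ∑ i, ⟪∑ j, x j, x i⟫ = ‖∑ j, x j‖ ^ 2 := by
    rw [← inner_sum, real_inner_self_eq_norm_sq]
  simp only [norm_sub_sq_real, sum_add_distrib, sum_sub_distrib, ← mul_sum, hinner,
    sum_const, card_univ, nsmul_eq_mul]
  ring

theorem sum_norm_sq_le_sum_norm_sum_sub_sq (hι : 2 ≤ Fintype.card ι) (x : ι → F) :
    ∑ i, ‖x i‖ ^ 2 ≤ ∑ i, ‖∑ j, x j - x i‖ ^ 2 := by
  have hcard : (2 : ℝ) ≤ Fintype.card ι := mod_cast hι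
  rw [sum_norm_sum_sub_sq]
  nlinarith [sq_nonneg ‖∑ j, x j‖]

theorem sum_norm_sum_sub_sq_le (hι : 2 ≤ Fintype.card ι) (x : ι → F) :
    ∑ i, ‖∑ j, x j - x i‖ ^ 2 ≤ (Fintype.card ι - 1) ^ 2 * ∑ i, ‖x i‖ ^ 2 := by
  have hcard : (2 : ℝ) ≤ Fintype.card ι := mod_cast hι
  have hcs : ‖∑ j, x j‖ ^ 2 ≤ Fintype.card ι * ∑ i, ‖x i‖ ^ 2 :=
    (pow_le_pow_left₀ (norm_nonneg _) (norm_sum_le _ _) 2).trans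
      (by simpa using sq_sum_le_card_mul_sum_sq (s := univ) (f := fun j => ‖x j‖))
  rw [sum_norm_sum_sub_sq]
  nlinarith [mul_le_mul_of_nonneg_left hcs (sub_nonneg.2 hcard)]

end Block

section Fiber

variable {V E F : Type*} (p : E → V) [∀ v, Fintype {e // p e = v}]

def fiberSum [AddCommMonoid F] (f : E → F) (v : V) : F := ∑ e : {e // p e = v}, f e

/-- On the fibre of each `v` this is `J - I`. With `p = tail`, the non-backtracking operator is
`f ↦ fiberSumSub tail f ∘ inv`. -/
def fiberSumSub [AddCommGroup F] (f : E → F) (e : E) : F := fiberSum p f (p e) - f e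

/-- `(J - I)⁻¹ = J / (d - 1) - I` on a fibre of size `d`. -/
noncomputable def fiberSumSubInv [AddCommGroup F] [Module ℝ F] (g : E → F) (e : E) : F :=
  ((Fintype.card {x // p x = p e} : ℝ) - 1)⁻¹ • fiberSum p g (p e) - g e

theorem fiberSumSub_of_fiber [AddCommGroup F] (f : E → F) {v : V} (e : {e // p e = v}) :
    fiberSumSub p f e = fiberSum p f v - f e := by
  rw [fiberSumSub, e.2]

theorem tsum_fiber_ne_eq_fiberSumSub [AddCommGroup F] [TopologicalSpace F] (f : E → F) (e : E) :
    ∑' x : {x // p x = p e ∧ x ≠ e}, f x = fiberSumSub p f e := by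
  classical
  let ι : {y : {x // p x = p e} // y ≠ ⟨e, rfl⟩} ≃ {x // p x = p e ∧ x ≠ e} :=
    (Equiv.subtypeEquivRight fun _ => Subtype.ext_iff.not).trans
      (Equiv.subtypeSubtypeEquivSubtypeInter _ (· ≠ e))
  rw [← ι.tsum_eq, tsum_fintype, fiberSumSub, fiberSum,
    Fintype.sum_eq_add_sum_subtype_ne (fun x : {x // p x = p e} => f x) ⟨e, rfl⟩,
    add_sub_cancel_left]
  rfl

theorem fiberSumSub_fiberSumSubInv [AddCommGroup F] [Module ℝ F]
    (hdeg : ∀ v, Fintype.card {e // p e = v} ≠ 1) (g : E → F) :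
    fiberSumSub p (fiberSumSubInv p g) = g := by
  funext e
  have hc1 : (Fintype.card {x // p x = p e} : ℝ) - 1 ≠ 0 := sub_ne_zero.2 (mod_cast hdeg (p e))
  set c : ℝ := (Fintype.card {x // p x = p e} : ℝ)
  have hc : c * (c - 1)⁻¹ = 1 + (c - 1)⁻¹ := by
    field_simp
    ring
  have hsum : fiberSum p (fiberSumSubInv p g) (p e) =
      c • (c - 1)⁻¹ • fiberSum p g (p e) - fiberSum p g (p e) := by
    rw [fiberSum, sum_congr rfl fun x _ => by rw [fiberSumSubInv, x.2], sum_sub_distrib, sum_const,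
      card_univ, ← Nat.cast_smul_eq_nsmul ℝ]
    rfl
  rw [fiberSumSub, hsum, fiberSumSubInv, smul_smul, hc, add_smul, one_smul]
  abel

theorem hasSum_fiberSum [NormedAddCommGroup F] [CompleteSpace F] {f : E → F} {a : F}
    (hf : HasSum f a) : HasSum (fiberSum p f) a := by
  convert hf.tsum_fiberwise p with v
  exact (tsum_fintype (L := .unconditional _) fun e : {e // p e = v} => f e).symm

theorem summable_and_tsum_le_of_fiberSum_le {h k : E → ℝ} (hh : ∀ e, 0 ≤ h e) (hk : Summable k)
    (hle : ∀ v, fiberSum p h v ≤ fiberSum p k v) : Summable h ∧ ∑' e, h e ≤ ∑' e, k e := by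
  have hk' := hasSum_fiberSum p hk.hasSum
  have hh' : Summable h := by
    refine (Equiv.sigmaFiberEquiv p).summable_iff.1 ((summable_sigma_of_nonneg fun _ => hh _).2
      ⟨fun _ => .of_finite, ?_⟩)
    simp only [tsum_fintype]
    exact hk'.summable.of_nonneg_of_le (fun v => sum_nonneg fun e _ => hh e) hle
  exact ⟨hh', hasSum_le hle (hasSum_fiberSum p hh'.hasSum) hk'⟩

variable [NormedAddCommGroup F] [InnerProductSpace ℝ F]

theorem summable_norm_fiberSumSub_sq_and_tsum_le {d : ℕ}
    (hdeg : ∀ v, 2 ≤ Fintype.card {e // p e = v} ∧ Fintype.card {e // p e = v} ≤ d)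
    {f : E → F} (hf : Summable fun e => ‖f e‖ ^ 2) :
    Summable (fun e => ‖fiberSumSub p f e‖ ^ 2) ∧
      ∑' e, ‖fiberSumSub p f e‖ ^ 2 ≤ ((d : ℝ) - 1) ^ 2 * ∑' e, ‖f e‖ ^ 2 := by
  rw [← tsum_mul_left]
  refine summable_and_tsum_le_of_fiberSum_le p (fun _ => sq_nonneg _) (hf.mul_left _) fun v => ?_
  have hcard : (2 : ℝ) ≤ Fintype.card {e // p e = v} := mod_cast (hdeg v).1
  simp only [fiberSum, fiberSumSub_of_fiber, ← mul_sum]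
  refine (sum_norm_sum_sub_sq_le (hdeg v).1 fun e : {e // p e = v} => f e).trans ?_
  gcongr
  · linarith
  · exact_mod_cast (hdeg v).2

theorem summable_norm_sq_and_tsum_le_fiberSumSub (hdeg : ∀ v, 2 ≤ Fintype.card {e // p e = v})
    {f : E → F} (hf : Summable fun e => ‖fiberSumSub p f e‖ ^ 2) :
    Summable (fun e => ‖f e‖ ^ 2) ∧ ∑' e, ‖f e‖ ^ 2 ≤ ∑' e, ‖fiberSumSub p f e‖ ^ 2 := by
  refine summable_and_tsum_le_of_fiberSum_le p (fun _ => sq_nonneg _) hf fun v => ?_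
  simp only [fiberSum, fiberSumSub_of_fiber]
  exact sum_norm_sq_le_sum_norm_sum_sub_sq (hdeg v) fun e : {e // p e = v} => f e

end Fiber

section L2

variable {ι : Type*} {G : ι → Type*} [∀ i, NormedAddCommGroup (G i)]

theorem lp.hasSum_norm_sq (f : lp G 2) : HasSum (fun i => ‖f i‖ ^ 2) (‖f‖ ^ 2) := by
  exact_mod_cast lp.hasSum_norm (p := 2) (by norm_num) f

theorem memℓp_two_iff_summable_norm_sq {f : ∀ i, G i} :
    Memℓp f 2 ↔ Summable fun i => ‖f i‖ ^ 2 := by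
  exact_mod_cast memℓp_gen_iff (p := 2) (by norm_num)

end L2

theorem ContinuousLinearMap.spectrum_subset_annulus {𝕜 X : Type*} [NontriviallyNormedField 𝕜]
    [NormedAddCommGroup X] [NormedSpace 𝕜 X] [CompleteSpace X] {T : X →L[𝕜] X}
    (hT : Function.Surjective T) {C : ℝ} (hlow : ∀ x, ‖x‖ ≤ ‖T x‖) (hup : ∀ x, ‖T x‖ ≤ C * ‖x‖) :
    spectrum 𝕜 T ⊆ {k | 1 ≤ ‖k‖ ∧ ‖k‖ ≤ C} := by
  intro k hk
  cases subsingleton_or_nontrivial X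
  · simp [spectrum.of_subsingleton] at hk
  have hinj : Function.Injective T :=
    (injective_iff_map_eq_zero T).2 fun x hx => norm_le_zero_iff.1 (by simpa [hx] using hlow x)
  obtain ⟨u, rfl⟩ := T.isUnit_iff_bijective.2 ⟨hinj, hT⟩
  have hinv : ‖(↑u⁻¹ : X →L[𝕜] X)‖ ≤ 1 := by
    refine opNorm_le_bound _ zero_le_one fun y => ?_
    have hy : (u : X →L[𝕜] X) ((↑u⁻¹ : X →L[𝕜] X) y) = y := DFunLike.congr_fun u.mul_inv y
    simpa only [hy, one_mul] using hlow ((↑u⁻¹ : X →L[𝕜] X) y)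
  obtain ⟨x, hx⟩ := exists_ne (0 : X)
  have hC : 0 ≤ C := by
    have := (hlow x).trans (hup x)
    nlinarith [norm_pos_iff.2 hx]
  constructor
  · have hk0 : k ≠ 0 := fun h => u.zero_notMem_spectrum 𝕜 (h ▸ hk)
    have hk' : k⁻¹ ∈ spectrum 𝕜 (↑u⁻¹ : X →L[𝕜] X) := spectrum.inv₀_mem_iff.1 (by rwa [inv_inv])
    have := spectrum.norm_le_norm_of_mem hk'
    rw [norm_inv] at this
    exact (inv_le_one₀ (norm_pos_iff.2 hk0)).1 (this.trans hinv)
  · exact (spectrum.norm_le_norm_of_mem hk).trans (opNorm_le_bound _ hC hup)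

section FiberSumSubComp

variable {V E F : Type*} [NormedAddCommGroup F] {p : E → V} [∀ v, Fintype {e // p e = v}]
  {σ : E ≃ E} {T : lp (fun _ : E => F) 2 → lp (fun _ : E => F) 2}

theorem norm_sq_eq_tsum_norm_fiberSumSub_sq (hT : ∀ f e, T f e = fiberSumSub p f (σ e))
    (f : lp (fun _ : E => F) 2) : ‖T f‖ ^ 2 = ∑' e, ‖fiberSumSub p f e‖ ^ 2 := by
  simp only [← (lp.hasSum_norm_sq (T f)).tsum_eq, hT]
  exact σ.tsum_eq fun e => ‖fiberSumSub p f e‖ ^ 2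

variable [InnerProductSpace ℝ F]

theorem norm_le_norm_of_eq_fiberSumSub_comp (hdeg : ∀ v, 2 ≤ Fintype.card {e // p e = v})
    (hT : ∀ f e, T f e = fiberSumSub p f (σ e)) (f : lp (fun _ : E => F) 2) : ‖f‖ ≤ ‖T f‖ := by
  refine (pow_le_pow_iff_left₀ (norm_nonneg _) (norm_nonneg _) two_ne_zero).1 ?_
  rw [norm_sq_eq_tsum_norm_fiberSumSub_sq hT, ← (lp.hasSum_norm_sq f).tsum_eq]
  refine (summable_norm_sq_and_tsum_le_fiberSumSub p hdeg (σ.summable_iff.1 ?_)).2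
  simpa only [hT, Function.comp_def] using (lp.hasSum_norm_sq (T f)).summable

theorem norm_le_of_eq_fiberSumSub_comp {d : ℕ}
    (hdeg : ∀ v, 2 ≤ Fintype.card {e // p e = v} ∧ Fintype.card {e // p e = v} ≤ d)
    (hT : ∀ f e, T f e = fiberSumSub p f (σ e)) (f : lp (fun _ : E => F) 2) :
    ‖T f‖ ≤ (d - 1) * ‖f‖ := by
  rcases isEmpty_or_nonempty E with _ | ⟨⟨e⟩⟩
  · rw [Subsingleton.elim (T f) 0, Subsingleton.elim f 0, norm_zero, mul_zero]
  have hd : (2 : ℝ) ≤ d := mod_cast (hdeg (p e)).1.trans (hdeg (p e)).2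
  refine (pow_le_pow_iff_left₀ (norm_nonneg _) (by nlinarith [norm_nonneg f]) two_ne_zero).1 ?_
  rw [norm_sq_eq_tsum_norm_fiberSumSub_sq hT, mul_pow, ← (lp.hasSum_norm_sq f).tsum_eq]
  exact (summable_norm_fiberSumSub_sq_and_tsum_le p hdeg (lp.hasSum_norm_sq f).summable).2

theorem surjective_of_eq_fiberSumSub_comp (hdeg : ∀ v, 2 ≤ Fintype.card {e // p e = v})
    (hT : ∀ f e, T f e = fiberSumSub p f (σ e)) : Function.Surjective T := fun g => by
  set f := fiberSumSubInv p fun e => g (σ.symm e)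
  have hf : fiberSumSub p f = fun e => g (σ.symm e) :=
    fiberSumSub_fiberSumSubInv p (fun v => by linarith [hdeg v]) _
  have hf2 : Memℓp f 2 := by
    refine memℓp_two_iff_summable_norm_sq.2 (summable_norm_sq_and_tsum_le_fiberSumSub p hdeg ?_).1
    rw [hf]
    exact σ.symm.summable_iff.2 (lp.hasSum_norm_sq g).summable
  refine ⟨⟨f, hf2⟩, lp.ext (funext fun e => ?_)⟩
  rw [hT]
  exact (congrFun hf (σ e)).trans (congrArg g (σ.symm_apply_apply e))

end FiberSumSubComp

theorem nonbacktracking_norm_bounds_and_annulus_general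
    {V E : Type} (tail head : E → V) (inv : E → E)
    (hinv_inv : ∀ e, inv (inv e) = e)
    (htail_inv : ∀ e, tail (inv e) = head e)
    (follows : E → E → Prop)
    (hfollows : ∀ e e', follows e e' ↔ head e = tail e' ∧ e' ≠ inv e)
    (dmax : ℕ)
    (hdeg : ∀ v : V, 2 ≤ Nat.card {e : E // tail e = v} ∧
      Nat.card {e : E // tail e = v} ≤ dmax)
    (B : lp (fun _ : E => ℂ) 2 →L[ℂ] lp (fun _ : E => ℂ) 2)
    (hB : ∀ f e, B f e = ∑' e' : {e' : E // follows e e'}, f e') :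
    (∀ f : lp (fun _ : E => ℂ) 2, f ≠ 0 →
      ‖f‖ ≤ ‖B f‖ ∧ ‖B f‖ ≤ ((dmax : ℝ) - 1) * ‖f‖) ∧
    spectrum ℂ B ⊆ {lam : ℂ | 1 ≤ ‖lam‖ ∧ ‖lam‖ ≤ (dmax : ℝ) - 1} := by
  have : ∀ v, Finite {e // tail e = v} := fun v =>
    Nat.finite_of_card_ne_zero (by linarith [(hdeg v).1])
  let _ : ∀ v, Fintype {e // tail e = v} := fun v => Fintype.ofFinite _
  simp only [Nat.card_eq_fintype_card] at hdeg
  have hT : ∀ f e, B f e = fiberSumSub tail f (Function.Involutive.toPerm inv hinv_inv e) :=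
    fun f e => by
      have hiff : ∀ e', follows e e' ↔ tail e' = tail (inv e) ∧ e' ≠ inv e := fun e' => by
        rw [hfollows, htail_inv, eq_comm]
      change B f e = fiberSumSub tail f (inv e)
      rw [hB, ← tsum_fiber_ne_eq_fiberSumSub]
      exact (Equiv.subtypeEquivRight hiff).tsum_eq fun e' => f e'
  have hlow := norm_le_norm_of_eq_fiberSumSub_comp (fun v => (hdeg v).1) hT
  have hup := norm_le_of_eq_fiberSumSub_comp hdeg hT
  exact ⟨fun f _ => ⟨hlow f, hup f⟩,
    B.spectrum_subset_annulus (surjective_of_eq_fiberSumSub_comp (fun v => (hdeg v).1) hT) hlow hup⟩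

/-- For a graph with minimal degree at least 2 and maximal degree `dmax`,
for every nonzero `f` in `ℓ²` of the directed edges, `‖Bf‖/‖f‖ ∈ [1, dmax - 1]`;
consequently the spectrum of `B` is contained in the annulus
`{λ : 1 ≤ |λ| ≤ dmax - 1}`. -/
theorem nonbacktracking_norm_bounds_and_annulus
    {V E : Type} (tail head : E → V) (inv : E → E)
    (hinv_inv : ∀ e, inv (inv e) = e)
    (hinv_ne : ∀ e, inv e ≠ e)
    (htail_inv : ∀ e, tail (inv e) = head e)
    (follows : E → E → Prop)
    (hfollows : ∀ e e', follows e e' ↔ head e = tail e' ∧ e' ≠ inv e)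
    (dmax : ℕ)
    (hdeg : ∀ v : V, 2 ≤ Nat.card {e : E // tail e = v} ∧
      Nat.card {e : E // tail e = v} ≤ dmax)
    (B : lp (fun _ : E => ℂ) 2 →L[ℂ] lp (fun _ : E => ℂ) 2)
    (hB : ∀ f e, B f e = ∑' e' : {e' : E // follows e e'}, f e') :
    (∀ f : lp (fun _ : E => ℂ) 2, f ≠ 0 →
      ‖f‖ ≤ ‖B f‖ ∧ ‖B f‖ ≤ ((dmax : ℝ) - 1) * ‖f‖) ∧
    spectrum ℂ B ⊆ {lam : ℂ | 1 ≤ ‖lam‖ ∧ ‖lam‖ ≤ (dmax : ℝ) - 1} :=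
  nonbacktracking_norm_bounds_and_annulus_general tail head inv hinv_inv htail_inv follows hfollows
    dmax hdeg B hB
end

section
/- For any bipartite graph G, the spectrum of the non-backtracking operator B is invariant under lambda -> -lambda, and also under complex conjugation; hence it is invariant under reflection in both the real and imaginary axes. -/
/-!
Let `N` multiply a 1-form by `-1` on the edges whose tail lies on one side of the bipartition.
A non-backtracking step `e → e'` has `head e = tail e'`, and the sides alternate along edges,
so consecutive edges carry opposite signs: `N B N = -B` with `N² = 1`, and conjugation by the
unit `N` gives `σ(-B) = σ(B)`. Moreover `B` has real (`0/1`) matrix entries, so it is fixed by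
the ring endomorphism `T ↦ C T C`, `C` the coordinatewise complex conjugation; this
endomorphism conjugates scalars, hence maps `λ - B` to `conj λ - B` and preserves invertibility.
-/

open scoped ENNReal

theorem spectrum.neg_mem_iff_of_mul_mul_eq_neg {R A : Type*} [CommRing R] [Ring A] [Algebra R A]
    {a u : A} (hu : u * u = 1) (hua : u * a * u = -a) {r : R} :
    -r ∈ spectrum R a ↔ r ∈ spectrum R a := by
  have h : spectrum R (-a) = spectrum R a := by
    rw [← hua]
    exact spectrum.units_conjugate (u := ⟨u, u, hu, hu⟩)
  calc -r ∈ spectrum R a ↔ r ∈ -spectrum R a := Set.mem_neg.symm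
    _ ↔ r ∈ spectrum R a := by rw [spectrum.neg_eq, h]

theorem spectrum.star_mem_iff_of_map_eq_self {R A : Type*} [CommSemiring R] [StarRing R]
    [Ring A] [Algebra R A] (φ : A →+* A)
    (hφ : ∀ r, φ (algebraMap R A r) = algebraMap R A (star r)) {a : A} (ha : φ a = a) {r : R} :
    star r ∈ spectrum R a ↔ r ∈ spectrum R a := by
  have h : ∀ r : R, r ∉ spectrum R a → star r ∉ spectrum R a := by
    intro r hr
    rw [spectrum.notMem_iff] at hr ⊢
    simpa only [map_sub, hφ, ha] using hr.map φ
  exact ⟨not_imp_not.1 (h r), fun hr => not_imp_not.1 (h (star r)) (by rwa [star_star])⟩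

namespace ContinuousLinearMap

variable {R E : Type*} [CommSemiring R] [StarRing R] [AddCommGroup E] [TopologicalSpace E]
  [IsTopologicalAddGroup E] [Module R E] [StarAddMonoid E] [StarModule R E] [ContinuousStar E]

def starConj : (E →L[R] E) →+* (E →L[R] E) where
  toFun T :=
    { toFun := fun x => star (T (star x))
      map_add' := fun x y => by simp only [star_add, map_add]
      map_smul' := fun c x => by simp only [star_smul, map_smul, star_star, RingHom.id_apply]
      cont := continuous_star.comp (T.continuous.comp continuous_star) }
  map_one' := by ext x; simp
  map_mul' T S := by ext x; simp
  map_zero' := by ext x; simp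
  map_add' T S := by ext x; simp

@[simp] theorem starConj_apply (T : E →L[R] E) (x : E) : starConj T x = star (T (star x)) := rfl

theorem starConj_algebraMap [ContinuousConstSMul R E] (r : R) :
    starConj (algebraMap R (E →L[R] E) r) = algebraMap R (E →L[R] E) (star r) := by
  ext x
  simp

end ContinuousLinearMap

namespace lp

variable {𝕜 ι : Type*} [NormedField 𝕜] {p : ℝ≥0∞} [Fact (1 ≤ p)]

noncomputable def diagonal (s : ι → 𝕜) (hs : ∀ i, ‖s i‖ ≤ 1) :
    lp (fun _ : ι => 𝕜) p →L[𝕜] lp (fun _ : ι => 𝕜) p :=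
  have hle (f : lp (fun _ : ι => 𝕜) p) (i : ι) : ‖s i * f i‖ ≤ ‖f i‖ := by
    rw [norm_mul]; exact mul_le_of_le_one_left (norm_nonneg _) (hs i)
  LinearMap.mkContinuous
    { toFun := fun f => ⟨fun i => s i * f i, (lp.memℓp f).mono' (hle f)⟩
      map_add' := fun f g => lp.ext <| funext fun i => mul_add (s i) (f i) (g i)
      map_smul' := fun c f => by ext i; simp [mul_left_comm] }
    1 (fun f => by
      rw [one_mul]
      exact lp.norm_mono (zero_lt_one.trans_le (Fact.out : (1 : ℝ≥0∞) ≤ p)).ne' (hle f))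

@[simp] theorem diagonal_apply (s : ι → 𝕜) (hs : ∀ i, ‖s i‖ ≤ 1) (f : lp (fun _ : ι => 𝕜) p)
    (i : ι) : diagonal s hs f i = s i * f i := rfl

theorem diagonal_mul_self {s : ι → 𝕜} (hs : ∀ i, ‖s i‖ ≤ 1) (hss : ∀ i, s i * s i = 1) :
    (diagonal s hs : lp (fun _ : ι => 𝕜) p →L[𝕜] _) * diagonal s hs = 1 := by
  ext f i
  simp [← mul_assoc, hss]

end lp

section RelationOperator

variable {𝕜 ι : Type*} {p : ℝ≥0∞} [Fact (1 ≤ p)] {R : ι → ι → Prop}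

theorem lp.diagonal_mul_mul_diagonal_eq_neg [NormedField 𝕜]
    {B : lp (fun _ : ι => 𝕜) p →L[𝕜] lp (fun _ : ι => 𝕜) p}
    (hB : ∀ f i, B f i = ∑' j : {j // R i j}, f j) {s : ι → 𝕜} (hs : ∀ i, ‖s i‖ ≤ 1)
    (hflip : ∀ i j, R i j → s i * s j = -1) :
    lp.diagonal s hs * B * lp.diagonal s hs = -B := by
  ext f i
  calc s i * B (lp.diagonal s hs f) i
      = ∑' j : {j // R i j}, s i * s j * f j := by
        simp only [hB, lp.diagonal_apply, ← tsum_mul_left, mul_assoc]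
    _ = -B f i := by
        simp only [hB, fun j : {j // R i j} => hflip i j j.2, neg_one_mul, tsum_neg]

theorem ContinuousLinearMap.starConj_eq_self_of_apply_eq_tsum [RCLike 𝕜]
    {B : lp (fun _ : ι => 𝕜) p →L[𝕜] lp (fun _ : ι => 𝕜) p}
    (hB : ∀ f i, B f i = ∑' j : {j // R i j}, f j) :
    ContinuousLinearMap.starConj B = B := by
  ext f i
  simp only [ContinuousLinearMap.starConj_apply, lp.star_apply, hB, ← tsum_star, star_star]

end RelationOperator

theorem bipartite_nonbacktracking_spectrum_fourfold_symmetry_general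
    {V E : Type} (tail head : E → V) (inv : E → E)
    (follows : E → E → Prop)
    (hfollows : ∀ e e', follows e e' ↔ head e = tail e' ∧ e' ≠ inv e)
    -- bipartition: `side` alternates along every edge
    (side : V → Bool)
    (hbip : ∀ e : E, side (head e) = ! side (tail e))
    (B : lp (fun _ : E => ℂ) 2 →L[ℂ] lp (fun _ : E => ℂ) 2)
    (hB : ∀ f e, B f e = ∑' e' : {e' : E // follows e e'}, f e') :
    ∀ lam : ℂ, (lam ∈ spectrum ℂ B ↔ -lam ∈ spectrum ℂ B) ∧
      (lam ∈ spectrum ℂ B ↔ (starRingEnd ℂ) lam ∈ spectrum ℂ B) := by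
  let s : E → ℂ := fun e => if side (tail e) then -1 else 1
  have hs_norm : ∀ e, ‖s e‖ ≤ 1 := fun e => by cases h : side (tail e) <;> simp [s, h]
  have hs_sq : ∀ e, s e * s e = 1 := fun e => by cases h : side (tail e) <;> simp [s, h]
  have hs_flip : ∀ e e', follows e e' → s e * s e' = -1 := by
    intro e e' h
    have hside : side (tail e') = ! side (tail e) := by rw [← ((hfollows e e').1 h).1, hbip]
    cases hside' : side (tail e) <;> simp [s, hside, hside']
  intro lam
  constructor
  · exact (spectrum.neg_mem_iff_of_mul_mul_eq_neg (lp.diagonal_mul_self hs_norm hs_sq)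
      (lp.diagonal_mul_mul_diagonal_eq_neg hB hs_norm hs_flip)).symm
  · rw [starRingEnd_apply]
    exact (spectrum.star_mem_iff_of_map_eq_self _ ContinuousLinearMap.starConj_algebraMap
      (ContinuousLinearMap.starConj_eq_self_of_apply_eq_tsum hB)).symm

/-- For a bipartite graph, the spectrum of the non-backtracking operator `B`
is invariant under `λ ↦ -λ` and under complex conjugation; hence it is invariant under
reflection in both the real and the imaginary axes. -/
theorem bipartite_nonbacktracking_spectrum_fourfold_symmetry
    {V E : Type} (tail head : E → V) (inv : E → E)
    (hinv_inv : ∀ e, inv (inv e) = e)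
    (hinv_ne : ∀ e, inv e ≠ e)
    (htail_inv : ∀ e, tail (inv e) = head e)
    (follows : E → E → Prop)
    (hfollows : ∀ e e', follows e e' ↔ head e = tail e' ∧ e' ≠ inv e)
    (dmax : ℕ)
    (hdeg : ∀ v : V, 2 ≤ Nat.card {e : E // tail e = v} ∧
      Nat.card {e : E // tail e = v} ≤ dmax)
    -- bipartition: `side` alternates along every edge
    (side : V → Bool)
    (hbip : ∀ e : E, side (head e) = ! side (tail e))
    (B : lp (fun _ : E => ℂ) 2 →L[ℂ] lp (fun _ : E => ℂ) 2)
    (hB : ∀ f e, B f e = ∑' e' : {e' : E // follows e e'}, f e') :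
    ∀ lam : ℂ, (lam ∈ spectrum ℂ B ↔ -lam ∈ spectrum ℂ B) ∧
      (lam ∈ spectrum ℂ B ↔ (starRingEnd ℂ) lam ∈ spectrum ℂ B) :=
  bipartite_nonbacktracking_spectrum_fourfold_symmetry_general tail head inv follows hfollows side
    hbip B hB
end

section
/- Let G be a graph with bounded degrees d_max, minimal degree at least 2, and let lambda in C with lambda ≠ ±1. If Q_lambda is not invertible then B - lambda*I is not invertible. Concretely: given f on vertices with ||f|| = 1 and ||Q_lambda f|| < epsilon, the 1-form g defined by g(u,v) = f(u) - lambda f(v) satisfies ((B - lambda I)g)(u,v) = (Q_lambda f)(v), hence ||(B - lambda I)g||^2 <= d_max * epsilon^2, while ||g||^2 >= c(lambda) > 0 where c(lambda) depends only on lambda ≠ ±1. -/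
/-!
For `f` on vertices let `g (u, v) = f u - λ f v` on directed edges. The edges following `(u, v)`
are those leaving `v` other than `(v, u)`, which gives `((B - λ) g) (u, v) = (Q_λ f) v`; moreover
`g (u, v) + λ g (v, u) = (1 - λ²) f u`. Every vertex has between one and `dmax` outgoing edges, so
if `B - λ` is bounded below then so is `Q_λ`:
`|1 - λ²| ‖f‖ ≤ (1 + |λ|) ‖(B - λ)⁻¹‖ √dmax ‖Q_λ f‖`.
As `A` and `Q` are self-adjoint and commute with complex conjugation, the adjoint `Q_λ* = Q_λ̄` is
conjugate to `Q_λ`, hence injective as well, and a bounded below operator on a Hilbert space with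
injective adjoint is invertible.
-/

open scoped ENNReal NNReal InnerProductSpace

theorem ENNReal.tsum_comp_eq_tsum_card_fiber_mul {α β : Type*} (p : β → α) (h : α → ℝ≥0∞) :
    ∑' b, h (p b) = ∑' a, ENat.card {b // p b = a} * h a := by
  rw [← ENNReal.tsum_fiberwise _ p]
  refine tsum_congr fun a => ?_
  calc ∑' b : p ⁻¹' {a}, h (p b) = ∑' _ : {b // p b = a}, h a :=
        tsum_congr fun b => congrArg h b.2
    _ = _ := ENNReal.tsum_const _

theorem finite_of_card_le_natCast {α : Type*} {n : ℕ} (h : ENat.card α ≤ n) : Finite α :=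
  ENat.card_lt_top.mp (h.trans_lt (ENat.natCast_lt_top n))

theorem tsum_subtype_and_ne {ι M : Type*} [AddCommGroup M] [TopologicalSpace M] {P : ι → Prop}
    [Finite {i // P i}] {a : ι} (ha : P a) (x : ι → M) :
    ∑' i : {i // P i ∧ i ≠ a}, x i = ∑' i : {i // P i}, x i - x a := by
  classical
  have := Fintype.ofFinite {i // P i}
  let e : {j : {i // P i} // j ≠ ⟨a, ha⟩} ≃ {i // P i ∧ i ≠ a} :=
    (Equiv.subtypeEquivRight fun j => not_congr Subtype.ext_iff).trans
      (Equiv.subtypeSubtypeEquivSubtypeInter P (· ≠ a))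
  rw [← e.tsum_eq, tsum_fintype, tsum_fintype,
    Fintype.sum_eq_add_sum_subtype_ne (fun i : {i // P i} => x i) ⟨a, ha⟩]
  simp [e]

theorem norm_le_sqrt_mul_norm_of_enorm_sq_le {X Y : Type*} [SeminormedAddCommGroup X]
    [SeminormedAddCommGroup Y] {x : X} {y : Y} {c : ℝ≥0} (h : ‖x‖ₑ ^ 2 ≤ c * ‖y‖ₑ ^ 2) :
    ‖x‖ ≤ √c * ‖y‖ := by
  have h' : ‖x‖₊ ^ 2 ≤ c * ‖y‖₊ ^ 2 := by
    simpa only [enorm_eq_nnnorm, ← ENNReal.coe_pow, ← ENNReal.coe_mul, ENNReal.coe_le_coe] using h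
  rw [← Real.sqrt_sq (norm_nonneg y), ← Real.sqrt_mul c.coe_nonneg]
  exact Real.le_sqrt_of_sq_le (by exact_mod_cast h')

namespace ContinuousLinearMap

theorem exists_antilipschitz_of_mul_norm_le {𝕜 E F : Type*} [NontriviallyNormedField 𝕜]
    [SeminormedAddCommGroup E] [SeminormedAddCommGroup F] [NormedSpace 𝕜 E] [NormedSpace 𝕜 F]
    (T : E →L[𝕜] F) {c C : ℝ} (hc : 0 < c) (h : ∀ x, c * ‖x‖ ≤ C * ‖T x‖) :
    ∃ K, AntilipschitzWith K T := by
  refine ⟨(C / c).toNNReal, T.antilipschitz_of_bound fun x => ?_⟩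
  calc ‖x‖ ≤ C / c * ‖T x‖ := by
        rw [div_mul_eq_mul_div, le_div_iff₀ hc, mul_comm]; exact h x
    _ ≤ (C / c).toNNReal * ‖T x‖ := by gcongr; exact Real.le_coe_toNNReal _

theorem isUnit_of_antilipschitz_of_injective_adjoint {𝕜 H : Type*} [RCLike 𝕜]
    [NormedAddCommGroup H] [InnerProductSpace 𝕜 H] [CompleteSpace H] {T : H →L[𝕜] H} {K : ℝ≥0}
    (hT : AntilipschitzWith K T) (hT' : Function.Injective T.adjoint) : IsUnit T := by
  rw [isUnit_iff_bijective, bijective_iff_dense_range_and_antilipschitz]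
  refine ⟨?_, K, hT⟩
  rw [Submodule.topologicalClosure_eq_top_iff, orthogonal_range]
  exact LinearMap.ker_eq_bot.mpr hT'

end ContinuousLinearMap

namespace lp

theorem enorm_sq_eq_tsum {α : Type*} {E : α → Type*} [∀ a, NormedAddCommGroup (E a)]
    (f : lp E 2) : ‖f‖ₑ ^ 2 = ∑' a, ‖f a‖ₑ ^ 2 := by
  have h := lp.hasSum_norm (p := 2) (by norm_num) f
  simp only [ENNReal.toReal_ofNat, Real.rpow_two] at h
  simp_rw [← ofReal_norm, ← ENNReal.ofReal_pow (norm_nonneg _), ← h.tsum_eq]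
  exact ENNReal.ofReal_tsum_of_nonneg (fun _ => by positivity) h.summable

theorem _root_.memℓp_two_of_tsum_enorm_sq_ne_top {α : Type*} {E : α → Type*}
    [∀ a, NormedAddCommGroup (E a)] {f : ∀ a, E a} (hf : ∑' a, ‖f a‖ₑ ^ 2 ≠ ∞) :
    Memℓp f 2 := by
  refine memℓp_gen ?_
  convert ENNReal.summable_toReal hf with a
  rw [← ofReal_norm, ← ENNReal.ofReal_pow (norm_nonneg _), ENNReal.toReal_ofReal (by positivity)]
  norm_num

/-! Fibre sizes are measured by `ENat.card`, so that a bound `≤ D` also rules out infinite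
fibres (which `Nat.card` would count as `0`). -/

variable {α β F : Type*} [NormedAddCommGroup F] {p : β → α} {D : ℕ}

theorem tsum_enorm_sq_comp_le (hp : ∀ a, ENat.card {b // p b = a} ≤ D)
    (f : lp (fun _ : α => F) 2) : ∑' b, ‖f (p b)‖ₑ ^ 2 ≤ D * ‖f‖ₑ ^ 2 := by
  rw [ENNReal.tsum_comp_eq_tsum_card_fiber_mul p (fun a => ‖f a‖ₑ ^ 2), enorm_sq_eq_tsum,
    ← ENNReal.tsum_mul_left]
  refine ENNReal.tsum_le_tsum fun a => mul_le_mul_left ?_ _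
  exact_mod_cast hp a

def pullback (p : β → α) (hp : ∀ a, ENat.card {b // p b = a} ≤ D)
    (f : lp (fun _ : α => F) 2) : lp (fun _ : β => F) 2 :=
  ⟨f ∘ p, memℓp_two_of_tsum_enorm_sq_ne_top <|
    ne_top_of_le_ne_top (by simp [ENNReal.mul_eq_top]) (tsum_enorm_sq_comp_le hp f)⟩

@[simp]
theorem pullback_apply (hp : ∀ a, ENat.card {b // p b = a} ≤ D) (f : lp (fun _ : α => F) 2)
    (b : β) : pullback p hp f b = f (p b) := rfl

theorem norm_pullback_le (hp : ∀ a, ENat.card {b // p b = a} ≤ D)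
    (f : lp (fun _ : α => F) 2) : ‖pullback p hp f‖ ≤ √D * ‖f‖ := by
  have h : ‖pullback p hp f‖ₑ ^ 2 ≤ (D : ℝ≥0) * ‖f‖ₑ ^ 2 := by
    rw [enorm_sq_eq_tsum]; exact_mod_cast tsum_enorm_sq_comp_le hp f
  simpa using norm_le_sqrt_mul_norm_of_enorm_sq_le h

theorem norm_le_norm_pullback (hp : ∀ a, ENat.card {b // p b = a} ≤ D) (hsurj : p.Surjective)
    (f : lp (fun _ : α => F) 2) : ‖f‖ ≤ ‖pullback p hp f‖ := by
  refine enorm_le_iff_norm_le.mp ((ENNReal.pow_le_pow_left_iff two_ne_zero).mp ?_)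
  rw [enorm_sq_eq_tsum, enorm_sq_eq_tsum]
  simp only [pullback_apply]
  rw [ENNReal.tsum_comp_eq_tsum_card_fiber_mul p (fun a => ‖f a‖ₑ ^ 2)]
  refine ENNReal.tsum_le_tsum fun a => le_mul_of_one_le_left' ?_
  have : Nonempty {b // p b = a} := let ⟨b, hb⟩ := hsurj a; ⟨⟨b, hb⟩⟩
  exact_mod_cast (ENat.one_le_card_iff_nonempty _).mpr this

theorem inner_pullback_right {𝕜 : Type*} [RCLike 𝕜] [InnerProductSpace 𝕜 F]
    (hp : ∀ a, ENat.card {b // p b = a} ≤ D) (y : lp (fun _ : β => F) 2)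
    (z : lp (fun _ : α => F) 2) :
    ⟪y, pullback p hp z⟫_𝕜 = ∑' a, ⟪∑' b : {b // p b = a}, y b, z a⟫_𝕜 := by
  rw [← ((lp.hasSum_inner (𝕜 := 𝕜) y (pullback p hp z)).tsum_fiberwise p).tsum_eq]
  refine tsum_congr fun a => ?_
  have := finite_of_card_le_natCast (hp a)
  have := Fintype.ofFinite {b // p b = a}
  change ∑' b : {b // p b = a}, ⟪y b, pullback p hp z b⟫_𝕜 = _
  rw [tsum_fintype, tsum_fintype, sum_inner]
  exact Finset.sum_congr rfl fun b _ => by rw [pullback_apply, b.2]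

end lp

section DeformedLaplacian

variable {𝕜 R : Type*} [CommSemiring 𝕜] [Ring R] [Algebra 𝕜 R]

def deformedLaplacian (Q A : R) (z : 𝕜) : R := Q - z • A + z ^ 2 • 1

theorem star_deformedLaplacian [StarRing 𝕜] [StarRing R] [StarModule 𝕜 R] {Q A : R}
    (hQ : IsSelfAdjoint Q) (hA : IsSelfAdjoint A) (z : 𝕜) :
    star (deformedLaplacian Q A z) = deformedLaplacian Q A (star z) := by
  simp [deformedLaplacian, star_smul, hQ.star_eq, hA.star_eq]

end DeformedLaplacian

section DeformedLaplacianApply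

variable {𝕜 H : Type*} [RCLike 𝕜] [NormedAddCommGroup H] [NormedSpace 𝕜 H] {Q A : H →L[𝕜] H}

theorem deformedLaplacian_apply (z : 𝕜) (x : H) :
    deformedLaplacian Q A z x = Q x - z • A x + z ^ 2 • x := by
  simp [deformedLaplacian]

variable [StarAddMonoid H] [StarModule 𝕜 H]

theorem deformedLaplacian_star_apply_star (hQ : ∀ x, Q (star x) = star (Q x))
    (hA : ∀ x, A (star x) = star (A x)) (z : 𝕜) (x : H) :
    deformedLaplacian Q A (star z) (star x) = star (deformedLaplacian Q A z x) := by
  simp [deformedLaplacian_apply, hQ, hA, star_smul]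

theorem injective_deformedLaplacian_star (hQ : ∀ x, Q (star x) = star (Q x))
    (hA : ∀ x, A (star x) = star (A x)) {z : 𝕜}
    (hz : Function.Injective ⇑(deformedLaplacian Q A z)) :
    Function.Injective ⇑(deformedLaplacian Q A (star z)) := by
  have h := deformedLaplacian_star_apply_star hQ hA (star z)
  rw [star_star] at h
  exact fun x y hxy => star_injective (hz (by rw [h, h, hxy]))

end DeformedLaplacianApply

section RealDiagonal

variable {𝕜 V : Type*} [RCLike 𝕜] {Q : lp (fun _ : V => 𝕜) 2 →L[𝕜] lp (fun _ : V => 𝕜) 2}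
  {c : V → ℝ}

theorem isSelfAdjoint_of_apply_eq_real_mul (hQ : ∀ f v, Q f v = c v * f v) :
    IsSelfAdjoint Q := by
  refine ContinuousLinearMap.isSelfAdjoint_iff_isSymmetric.mpr fun x z => ?_
  simp only [ContinuousLinearMap.coe_coe, lp.inner_eq_tsum, hQ, RCLike.inner_apply, map_mul,
    RCLike.conj_ofReal]
  exact tsum_congr fun v => by ring

theorem apply_star_of_apply_eq_real_mul (hQ : ∀ f v, Q f v = c v * f v)
    (x : lp (fun _ : V => 𝕜) 2) : Q (star x) = star (Q x) := by
  ext v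
  simp [hQ, lp.star_apply]

end RealDiagonal

section Graph

open lp

variable {V E : Type*} {tail head : E → V} {inv : E → E} {D : ℕ}

theorem head_inv_eq_tail (hinv_inv : ∀ e, inv (inv e) = e)
    (htail_inv : ∀ e, tail (inv e) = head e) (e : E) : head (inv e) = tail e := by
  rw [← htail_inv, hinv_inv]

theorem card_head_fiber_eq (hinv_inv : ∀ e, inv (inv e) = e)
    (htail_inv : ∀ e, tail (inv e) = head e) (v : V) :
    ENat.card {e // head e = v} = ENat.card {e // tail e = v} :=
  ENat.card_congr (Equiv.subtypeEquiv (q := fun e => tail e = v)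
    (Function.Involutive.toPerm inv hinv_inv) fun e => by rw [← htail_inv e]; rfl)

theorem tsum_follows_eq {follows : E → E → Prop}
    (hfollows : ∀ e e', follows e e' ↔ head e = tail e' ∧ e' ≠ inv e)
    (htail_inv : ∀ e, tail (inv e) = head e) (e : E) [Finite {e' // tail e' = head e}]
    (x : E → ℂ) :
    ∑' e' : {e' // follows e e'}, x e' = ∑' e' : {e' // tail e' = head e}, x e' - x (inv e) := by
  rw [← tsum_subtype_and_ne (P := fun e' => tail e' = head e) (htail_inv e) x]
  exact (Equiv.subtypeEquivRight fun e' =>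
    (hfollows e e').trans (and_congr_left' eq_comm)).tsum_eq fun e' => x e'

theorem sub_smul_one_apply_pullback_sub_smul_pullback
    (hinv_inv : ∀ e, inv (inv e) = e) (htail_inv : ∀ e, tail (inv e) = head e)
    {follows : E → E → Prop} (hfollows : ∀ e e', follows e e' ↔ head e = tail e' ∧ e' ≠ inv e)
    {B : lp (fun _ : E => ℂ) 2 →L[ℂ] lp (fun _ : E => ℂ) 2}
    (hB : ∀ f e, B f e = ∑' e' : {e' : E // follows e e'}, f e')
    {A Q : lp (fun _ : V => ℂ) 2 →L[ℂ] lp (fun _ : V => ℂ) 2}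
    (hA : ∀ f v, A f v = ∑' e : {e : E // tail e = v}, f (head e))
    (hQ : ∀ f v, Q f v = ((Nat.card {e : E // tail e = v} : ℂ) - 1) * f v)
    (htail : ∀ v, ENat.card {e // tail e = v} ≤ D)
    (hhead : ∀ v, ENat.card {e // head e = v} ≤ D) (lam : ℂ) (f : lp (fun _ : V => ℂ) 2) :
    (B - lam • 1) (pullback tail htail f - lam • pullback head hhead f) =
      pullback head hhead (deformedLaplacian Q A lam f) := by
  set g := pullback tail htail f - lam • pullback head hhead f
  have hg (e : E) : g e = f (tail e) - lam * f (head e) := rfl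
  ext e
  have := finite_of_card_le_natCast (htail (head e))
  have hout : ∑' e' : {e' // tail e' = head e}, g e' =
      Nat.card {e' // tail e' = head e} * f (head e) - lam * A f (head e) := by
    rw [hA, ← tsum_mul_left, ← nsmul_eq_mul, ← tsum_const,
      ← (Summable.of_finite).tsum_sub Summable.of_finite]
    exact tsum_congr fun e' => by rw [hg, e'.2]
  have hBg : B g e = Nat.card {e' // tail e' = head e} * f (head e) - lam * A f (head e) -
      (f (head e) - lam * f (tail e)) := by
    rw [hB, tsum_follows_eq hfollows htail_inv, hout, hg, htail_inv,
      head_inv_eq_tail hinv_inv htail_inv]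
  simp only [sub_apply, smul_apply, one_apply_eq_self, lp.coeFn_sub, lp.coeFn_smul,
    Pi.sub_apply, Pi.smul_apply, smul_eq_mul, pullback_apply, deformedLaplacian_apply,
    lp.coeFn_add, Pi.add_apply, hBg, hg, hQ]
  ring

theorem mul_norm_le_mul_norm_pullback_sub_smul_pullback (hinv_inv : ∀ e, inv (inv e) = e)
    (htail_inv : ∀ e, tail (inv e) = head e) (htail : ∀ v, ENat.card {e // tail e = v} ≤ D)
    (hhead : ∀ v, ENat.card {e // head e = v} ≤ D) (htail_surj : tail.Surjective)
    (lam : ℂ) (f : lp (fun _ : V => ℂ) 2) :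
    ‖1 - lam ^ 2‖ * ‖f‖ ≤ (1 + ‖lam‖) * ‖pullback tail htail f - lam • pullback head hhead f‖ := by
  set g := pullback tail htail f - lam • pullback head hhead f
  have hg (e : E) : g e = f (tail e) - lam * f (head e) := rfl
  have hinv (e : E) : ENat.card {e' // inv e' = e} ≤ (1 : ℕ) := by
    have : Subsingleton {e' // inv e' = e} :=
      ⟨fun a b => Subtype.ext (Function.Involutive.injective hinv_inv (a.2.trans b.2.symm))⟩
    exact_mod_cast (ENat.card_le_one_iff_subsingleton _).mpr this
  have hrecover : (1 - lam ^ 2) • pullback tail htail f = g + lam • pullback inv hinv g := by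
    ext e
    simp only [lp.coeFn_smul, lp.coeFn_add, Pi.smul_apply, Pi.add_apply, smul_eq_mul,
      pullback_apply, hg, htail_inv, head_inv_eq_tail hinv_inv htail_inv]
    ring
  calc ‖1 - lam ^ 2‖ * ‖f‖ ≤ ‖1 - lam ^ 2‖ * ‖pullback tail htail f‖ := by
        gcongr; exact norm_le_norm_pullback htail htail_surj f
    _ = ‖g + lam • pullback inv hinv g‖ := by rw [← hrecover, norm_smul]
    _ ≤ ‖g‖ + ‖lam‖ * ‖pullback inv hinv g‖ := by
        rw [← norm_smul]; exact norm_add_le _ _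
    _ ≤ ‖g‖ + ‖lam‖ * ‖g‖ := by gcongr; simpa using norm_pullback_le hinv g
    _ = (1 + ‖lam‖) * ‖g‖ := by ring

theorem mul_norm_le_norm_deformedLaplacian (hinv_inv : ∀ e, inv (inv e) = e)
    (htail_inv : ∀ e, tail (inv e) = head e)
    {follows : E → E → Prop} (hfollows : ∀ e e', follows e e' ↔ head e = tail e' ∧ e' ≠ inv e)
    {B : lp (fun _ : E => ℂ) 2 →L[ℂ] lp (fun _ : E => ℂ) 2}
    (hB : ∀ f e, B f e = ∑' e' : {e' : E // follows e e'}, f e')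
    {A Q : lp (fun _ : V => ℂ) 2 →L[ℂ] lp (fun _ : V => ℂ) 2}
    (hA : ∀ f v, A f v = ∑' e : {e : E // tail e = v}, f (head e))
    (hQ : ∀ f v, Q f v = ((Nat.card {e : E // tail e = v} : ℂ) - 1) * f v)
    (htail : ∀ v, ENat.card {e // tail e = v} ≤ D)
    (hhead : ∀ v, ENat.card {e // head e = v} ≤ D) (htail_surj : tail.Surjective)
    {lam : ℂ} {N : ℝ≥0}
    (hN : AntilipschitzWith N ⇑(B - lam • 1 : lp (fun _ : E => ℂ) 2 →L[ℂ] lp (fun _ : E => ℂ) 2))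
    (f : lp (fun _ : V => ℂ) 2) :
    ‖1 - lam ^ 2‖ * ‖f‖ ≤ (1 + ‖lam‖) * N * √D * ‖deformedLaplacian Q A lam f‖ := by
  set g := pullback tail htail f - lam • pullback head hhead f
  calc ‖1 - lam ^ 2‖ * ‖f‖ ≤ (1 + ‖lam‖) * ‖g‖ :=
        mul_norm_le_mul_norm_pullback_sub_smul_pullback hinv_inv htail_inv htail hhead
          htail_surj lam f
    _ ≤ (1 + ‖lam‖) * (N * ‖(B - lam • 1) g‖) := by
        gcongr; exact ContinuousLinearMap.bound_of_antilipschitz _ hN g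
    _ = (1 + ‖lam‖) * N * ‖pullback head hhead (deformedLaplacian Q A lam f)‖ := by
        rw [sub_smul_one_apply_pullback_sub_smul_pullback hinv_inv htail_inv hfollows hB hA hQ,
          mul_assoc]
    _ ≤ (1 + ‖lam‖) * N * (√D * ‖deformedLaplacian Q A lam f‖) := by
        gcongr; exact norm_pullback_le hhead _
    _ = (1 + ‖lam‖) * N * √D * ‖deformedLaplacian Q A lam f‖ := by ring

variable {A : lp (fun _ : V => ℂ) 2 →L[ℂ] lp (fun _ : V => ℂ) 2}

theorem inner_adjacency_eq_inner_pullback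
    (hA : ∀ f v, A f v = ∑' e : {e : E // tail e = v}, f (head e))
    (htail : ∀ v, ENat.card {e // tail e = v} ≤ D)
    (hhead : ∀ v, ENat.card {e // head e = v} ≤ D) (x z : lp (fun _ : V => ℂ) 2) :
    ⟪A x, z⟫_ℂ = ⟪pullback head hhead x, pullback tail htail z⟫_ℂ := by
  rw [inner_pullback_right, lp.inner_eq_tsum]
  exact tsum_congr fun v => by rw [hA]; rfl

theorem isSelfAdjoint_adjacency (hinv_inv : ∀ e, inv (inv e) = e)
    (htail_inv : ∀ e, tail (inv e) = head e)
    (hA : ∀ f v, A f v = ∑' e : {e : E // tail e = v}, f (head e))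
    (htail : ∀ v, ENat.card {e // tail e = v} ≤ D)
    (hhead : ∀ v, ENat.card {e // head e = v} ≤ D) : IsSelfAdjoint A := by
  refine ContinuousLinearMap.isSelfAdjoint_iff_isSymmetric.mpr fun x z => ?_
  have hreverse : ⟪pullback head hhead x, pullback tail htail z⟫_ℂ =
      ⟪pullback tail htail x, pullback head hhead z⟫_ℂ := by
    simp only [lp.inner_eq_tsum, pullback_apply]
    rw [← (Function.Involutive.toPerm inv hinv_inv).tsum_eq fun e => ⟪x (tail e), z (head e)⟫_ℂ]
    refine tsum_congr fun e => ?_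
    change _ = ⟪x (tail (inv e)), z (head (inv e))⟫_ℂ
    rw [htail_inv, head_inv_eq_tail hinv_inv htail_inv]
  simp only [ContinuousLinearMap.coe_coe]
  rw [inner_adjacency_eq_inner_pullback hA htail hhead, hreverse, ← inner_conj_symm,
    ← inner_adjacency_eq_inner_pullback hA htail hhead, inner_conj_symm]

theorem adjacency_apply_star (hA : ∀ f v, A f v = ∑' e : {e : E // tail e = v}, f (head e))
    (x : lp (fun _ : V => ℂ) 2) : A (star x) = star (A x) := by
  ext v
  simp [hA, lp.star_apply, Complex.conj_tsum]

end Graph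

theorem B_not_invertible_of_Qlambda_not_invertible_general
    {V E : Type} (tail head : E → V) (inv : E → E)
    (hinv_inv : ∀ e, inv (inv e) = e)
    (htail_inv : ∀ e, tail (inv e) = head e)
    (follows : E → E → Prop)
    (hfollows : ∀ e e', follows e e' ↔ head e = tail e' ∧ e' ≠ inv e)
    (dmax : ℕ)
    (hdeg : ∀ v : V, 2 ≤ Nat.card {e : E // tail e = v} ∧
      Nat.card {e : E // tail e = v} ≤ dmax)
    (B : lp (fun _ : E => ℂ) 2 →L[ℂ] lp (fun _ : E => ℂ) 2)
    (hB : ∀ f e, B f e = ∑' e' : {e' : E // follows e e'}, f e')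
    (A Q : lp (fun _ : V => ℂ) 2 →L[ℂ] lp (fun _ : V => ℂ) 2)
    (hA : ∀ f v, A f v = ∑' e : {e : E // tail e = v}, f (head e))
    (hQ : ∀ f v, Q f v = ((Nat.card {e : E // tail e = v} : ℂ) - 1) * f v)
    (lam : ℂ) (hlam1 : lam ≠ 1) (hlam2 : lam ≠ -1)
    (hQlam : ¬ IsUnit (Q - lam • A + lam ^ 2 • (1 : lp (fun _ : V => ℂ) 2 →L[ℂ]
        lp (fun _ : V => ℂ) 2))) :
    ¬ IsUnit (B - lam • (1 : lp (fun _ : E => ℂ) 2 →L[ℂ] lp (fun _ : E => ℂ) 2)) := by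
  change ¬ IsUnit (deformedLaplacian Q A lam) at hQlam
  intro hunit
  obtain ⟨-, N, hN⟩ := (B - lam • 1).bijective_iff_dense_range_and_antilipschitz.mp
    (ContinuousLinearMap.isUnit_iff_bijective.mp hunit)
  have hcard_pos (v : V) : 0 < Nat.card {e // tail e = v} := by have := (hdeg v).1; omega
  have htail (v : V) : ENat.card {e // tail e = v} ≤ dmax := by
    have := (Nat.card_pos_iff.mp (hcard_pos v)).2
    rw [ENat.card_eq_coe_natCard]; exact_mod_cast (hdeg v).2
  have hhead (v : V) := (card_head_fiber_eq hinv_inv htail_inv v).trans_le (htail v)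
  have htail_surj : tail.Surjective := fun v =>
    have ⟨e⟩ := (Nat.card_pos_iff.mp (hcard_pos v)).1
    ⟨e, e.2⟩
  have hlam : 0 < ‖1 - lam ^ 2‖ := norm_pos_iff.mpr <| by
    rw [sub_ne_zero, ne_comm, Ne, sq_eq_one_iff]; exact fun h => h.elim hlam1 hlam2
  obtain ⟨K, hK⟩ := (deformedLaplacian Q A lam).exists_antilipschitz_of_mul_norm_le hlam
    (mul_norm_le_norm_deformedLaplacian hinv_inv htail_inv hfollows hB hA hQ htail hhead
      htail_surj hN)
  have hQ' : ∀ f v, Q f v = ((Nat.card {e : E // tail e = v} - 1 : ℝ) : ℂ) * f v := by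
    simpa using hQ
  refine hQlam (ContinuousLinearMap.isUnit_of_antilipschitz_of_injective_adjoint hK ?_)
  rw [← ContinuousLinearMap.star_eq_adjoint, star_deformedLaplacian
    (isSelfAdjoint_of_apply_eq_real_mul hQ')
    (isSelfAdjoint_adjacency hinv_inv htail_inv hA htail hhead)]
  exact injective_deformedLaplacian_star (apply_star_of_apply_eq_real_mul hQ')
    (adjacency_apply_star hA) hK.injective

/-- For a graph with degrees bounded by `dmax`, minimal degree at least 2,
and `λ ≠ ±1`: if `Q_λ = Q - λA + λ²I` is not invertible, then `B - λI` is not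
invertible. -/
theorem B_not_invertible_of_Qlambda_not_invertible
    {V E : Type} (tail head : E → V) (inv : E → E)
    (hinv_inv : ∀ e, inv (inv e) = e)
    (hinv_ne : ∀ e, inv e ≠ e)
    (htail_inv : ∀ e, tail (inv e) = head e)
    (follows : E → E → Prop)
    (hfollows : ∀ e e', follows e e' ↔ head e = tail e' ∧ e' ≠ inv e)
    (dmax : ℕ)
    (hdeg : ∀ v : V, 2 ≤ Nat.card {e : E // tail e = v} ∧
      Nat.card {e : E // tail e = v} ≤ dmax)
    (B : lp (fun _ : E => ℂ) 2 →L[ℂ] lp (fun _ : E => ℂ) 2)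
    (hB : ∀ f e, B f e = ∑' e' : {e' : E // follows e e'}, f e')
    (A Q : lp (fun _ : V => ℂ) 2 →L[ℂ] lp (fun _ : V => ℂ) 2)
    (hA : ∀ f v, A f v = ∑' e : {e : E // tail e = v}, f (head e))
    (hQ : ∀ f v, Q f v = ((Nat.card {e : E // tail e = v} : ℂ) - 1) * f v)
    (lam : ℂ) (hlam1 : lam ≠ 1) (hlam2 : lam ≠ -1)
    (hQlam : ¬ IsUnit (Q - lam • A + lam ^ 2 • (1 : lp (fun _ : V => ℂ) 2 →L[ℂ]
        lp (fun _ : V => ℂ) 2))) :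
    ¬ IsUnit (B - lam • (1 : lp (fun _ : E => ℂ) 2 →L[ℂ] lp (fun _ : E => ℂ) 2)) :=
  B_not_invertible_of_Qlambda_not_invertible_general tail head inv hinv_inv htail_inv follows
    hfollows dmax hdeg B hB A Q hA hQ lam hlam1 hlam2 hQlam
end

section
/- With S_o, S_i as above and Q_lambda = lambda^2 I - lambda A + Q, one has the operator identity Q_lambda S_o = (S_i - lambda S_o)(B - lambda I). Hence if g is a 1-form with ||(B - lambda I)g|| < epsilon, then ||Q_lambda (S_o g)|| <= (1 + |lambda|) sqrt(d_max) epsilon. -/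
/-! Expanding `(S_i - λ S_o)(B - λ)` and substituting `S_i B = Q S_o` and
`S_o B = A S_o - S_i` gives `λ² S_o - λ A S_o + Q S_o`; the estimate is then the operator-norm
bound `‖S_i - λ S_o‖ ≤ (1 + |λ|) √dmax`. -/

namespace ContinuousLinearMap

theorem sq_smul_one_sub_smul_add_comp_eq_sub_smul_comp_sub_smul_one
    {R M N : Type*} [CommRing R]
    [TopologicalSpace M] [AddCommGroup M] [IsTopologicalAddGroup M] [Module R M]
    [ContinuousConstSMul R M]
    [TopologicalSpace N] [AddCommGroup N] [IsTopologicalAddGroup N] [Module R N]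
    [ContinuousConstSMul R N]
    {B : M →L[R] M} {A Q : N →L[R] N} {So Si : M →L[R] N}
    (hSiB : Si ∘L B = Q ∘L So) (hSoB : So ∘L B = A ∘L So - Si) (lam : R) :
    (lam ^ 2 • (1 : N →L[R] N) - lam • A + Q) ∘L So = (Si - lam • So) ∘L (B - lam • 1) := by
  simp only [sub_comp, comp_sub, add_comp, smul_comp, comp_smul, one_def, comp_id, id_comp,
    hSiB, hSoB]
  module

theorem norm_sub_smul_le_of_norm_le {𝕜 E F : Type*} [NontriviallyNormedField 𝕜]
    [SeminormedAddCommGroup E] [NormedSpace 𝕜 E] [SeminormedAddCommGroup F] [NormedSpace 𝕜 F]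
    {S T : E →L[𝕜] F} {c : ℝ} (hS : ‖S‖ ≤ c) (hT : ‖T‖ ≤ c) (lam : 𝕜) :
    ‖S - lam • T‖ ≤ (1 + ‖lam‖) * c :=
  calc ‖S - lam • T‖ ≤ ‖S‖ + ‖lam‖ * ‖T‖ := (norm_sub_le _ _).trans_eq (by rw [norm_smul])
    _ ≤ c + ‖lam‖ * c := by gcongr
    _ = (1 + ‖lam‖) * c := by ring

end ContinuousLinearMap

open ContinuousLinearMap in
/-- With `S_o`, `S_i` as before (satisfying `S_i B = Q S_o` and
`S_o B = A S_o - S_i`, with `‖S_o‖ = ‖S_i‖ = √dmax`) and `Q_λ = λ²I - λA + Q`, one has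
the operator identity `Q_λ S_o = (S_i - λ S_o)(B - λ I)`; hence if `g` is a 1-form with
`‖(B - λI)g‖ < ε` then `‖Q_λ (S_o g)‖ ≤ (1 + |λ|)·√dmax·ε`. -/
theorem Qlambda_So_factorization
    {V E : Type}
    (dmax : ℕ)
    (B : lp (fun _ : E => ℂ) 2 →L[ℂ] lp (fun _ : E => ℂ) 2)
    (A Q : lp (fun _ : V => ℂ) 2 →L[ℂ] lp (fun _ : V => ℂ) 2)
    (So Si : lp (fun _ : E => ℂ) 2 →L[ℂ] lp (fun _ : V => ℂ) 2)
    (hSiB : Si ∘L B = Q ∘L So)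
    (hSoB : So ∘L B = A ∘L So - Si)
    (hSonorm : ‖So‖ = Real.sqrt dmax)
    (hSinorm : ‖Si‖ = Real.sqrt dmax)
    (lam : ℂ) :
    (lam ^ 2 • (1 : lp (fun _ : V => ℂ) 2 →L[ℂ] lp (fun _ : V => ℂ) 2) - lam • A + Q) ∘L So =
        (Si - lam • So) ∘L (B - lam • 1) ∧
      ∀ (g : lp (fun _ : E => ℂ) 2) (ε : ℝ), ‖(B - lam • 1) g‖ < ε →
        ‖(lam ^ 2 • (1 : lp (fun _ : V => ℂ) 2 →L[ℂ] lp (fun _ : V => ℂ) 2) -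
            lam • A + Q) (So g)‖ ≤ (1 + ‖lam‖) * Real.sqrt dmax * ε := by
  have factorization := sq_smul_one_sub_smul_add_comp_eq_sub_smul_comp_sub_smul_one hSiB hSoB lam
  refine ⟨factorization, fun g ε hg => ?_⟩
  rw [← comp_apply, factorization, comp_apply]
  exact le_of_opNorm_le_of_le _
    (norm_sub_smul_le_of_norm_le hSinorm.le hSonorm.le lam) hg.le
end

section
/- Let T be a locally finite tree, M a connected local symmetric bounded invertible operator on l^2(V(T)) with Green function G, and e = (u,v) a directed edge. Define the relative kernel ker_e as the space of l^2 functions f supported on the branch T_e (the component of v in T minus e, together with u) with (Mf)(w) = 0 for all w in T_e other than u, and the relative null-kernel as those f in ker_e with f(u) = 0. Then: (i) if G(u,u) ≠ 0, ker_e is one-dimensional; (ii) if G(u,u) = G(u,v) = 0, ker_e is one-dimensional; (iii) if G(u,u) = 0 and G(u,v) ≠ 0, the relative null-kernel is one-dimensional. -/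
/-!
Write `w = M⁻¹ δ_u = G(u, ·)` and `B` for the branch. If `u ∈ S` and `u` is the only vertex of `S`
with neighbours outside `S`, then locality of `M` gives `M f = (M f)(u) δ_u` for every `f`
supported on `S` with `f u = 0` and `M f = 0` on `S \ {u}`, i.e. `f = (M f)(u) w`. For `S = B`
this puts the relative null-kernel on the line through `w`, so `ker_e` is a line as soon as it has
an element with `f u ≠ 0` and `w` is nonzero at `u` or vanishes on `B`; elements of `ker_e` are
obtained by restricting `M⁻¹ h` to `B` for any `h` vanishing on `B \ {u}`.
If `G(u,u) = 0`, the same fact for `S = {u} ∪ Bᶜ` gives `1_S w = c w`. Evaluating at `v` shows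
`c = 0` when `G(u,v) ≠ 0`, so `w ∈ ker_e`; evaluating `M` at `u` shows `c = 1` when `G(u,v) = 0`,
so `w` vanishes on `B`, and then `1_B M⁻¹ δ_y` for any `y` with `w y ≠ 0` takes the value
`G(y,u) = G(u,y) ≠ 0` at `u`.
-/

open scoped lp InnerProductSpace

local notation "δ" x:max => lp.single 2 x (1 : ℂ)

namespace SimpleGraph

variable {V : Type*} {G : SimpleGraph V}

def branch (G : SimpleGraph V) (u v : V) : Set V := {w | w = u ∨ G.dist w u = G.dist w v + 1}

def ExitsOnlyAt (G : SimpleGraph V) (S : Set V) (u : V) : Prop :=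
  ∀ ⦃x y⦄, x ∈ S → x ≠ u → G.Adj x y → y ∈ S

lemma left_mem_branch (G : SimpleGraph V) (u v : V) : u ∈ G.branch u v := Or.inl rfl

lemma right_mem_branch {u v : V} (huv : G.Adj u v) : v ∈ G.branch u v :=
  Or.inr (by simp [dist_comm, huv])

lemma right_notMem_insert_compl_branch {u v : V} (huv : G.Adj u v) :
    v ∉ insert u (G.branch u v)ᶜ := by
  simp [huv.ne', right_mem_branch huv]

lemma IsTree.eq_of_adj_of_dist_cross (hG : G.IsTree) {u v x y : V} (huv : G.Adj u v)
    (hxy : G.Adj x y) (hx : G.dist x u = G.dist x v + 1) (hy : G.dist y v = G.dist y u + 1) :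
    x = v ∧ y = u := by
  classical
  have hxu : G.dist x u = G.dist y u + 1 := by
    have := hG.dist_eq_dist_add_one_of_adj u hxy
    have := hG.dist_eq_dist_add_one_of_adj v hxy
    simp only [dist_comm (u := u), dist_comm (u := v)] at *
    omega
  obtain ⟨p, hp⟩ := hG.connected.exists_walk_length_eq_dist y u
  obtain ⟨q, hq⟩ := hG.connected.exists_walk_length_eq_dist x v
  have h₁ : (Walk.cons hxy p).IsPath := Walk.isPath_of_length_eq_dist _ (by simp; omega)
  have h₂ : (q.concat huv.symm).IsPath := Walk.isPath_of_length_eq_dist _ (by simp; omega)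
  have hv : v ∈ (Walk.cons hxy p).support := by
    rw [(hG.existsUnique_path x u).unique h₁ h₂]; simp
  rcases List.mem_cons.1 (Walk.support_cons hxy p ▸ hv) with rfl | hv
  · refine ⟨rfl, (hG.connected.dist_eq_zero_iff).1 ?_⟩
    rw [dist_self] at hx; omega
  · have := (dist_le (p.takeUntil v hv)).trans (p.length_takeUntil_le_length hv)
    omega

lemma IsTree.exitsOnlyAt_branch (hG : G.IsTree) {u v : V} (huv : G.Adj u v) :
    G.ExitsOnlyAt (G.branch u v) u := by
  rintro x y (rfl | hx) hxu hxy
  · exact absurd rfl hxu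
  by_contra hy
  simp only [branch, Set.mem_ofPred_eq, not_or] at hy
  have hy' : G.dist y v = G.dist y u + 1 := by
    have := hG.dist_eq_dist_add_one_of_adj y huv
    omega
  exact hy.1 (hG.eq_of_adj_of_dist_cross huv hxy hx hy').2

lemma IsTree.exitsOnlyAt_insert_compl_branch (hG : G.IsTree) {u v : V} (huv : G.Adj u v) :
    G.ExitsOnlyAt (insert u (G.branch u v)ᶜ) u := by
  intro x y hx hxu hxy
  by_contra hy
  simp only [Set.mem_insert_iff, Set.mem_compl_iff, not_or, not_not] at hx hy
  exact hx.resolve_left hxu (hG.exitsOnlyAt_branch huv hy.2 hy.1 hxy.symm)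

lemma IsTree.eq_of_adj_of_mem_branch (hG : G.IsTree) {u v y : V} (huv : G.Adj u v)
    (huy : G.Adj u y) (hy : y ∈ G.branch u v) : y = v :=
  (hG.eq_of_adj_of_dist_cross huv huy.symm (hy.resolve_left huy.ne') (by simp [huv])).1

def IsLocalOperator [DecidableEq V] (G : SimpleGraph V) (M : ℓ²(V, ℂ) →L[ℂ] ℓ²(V, ℂ)) : Prop :=
  ∀ x y, x ≠ y → ¬ G.Adj x y → M (δ y) x = 0

end SimpleGraph

noncomputable section
variable {T : Type*}

def lp.restrict (S : Set T) (f : ℓ²(T, ℂ)) : ℓ²(T, ℂ) :=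
  ⟨S.indicator f, (lp.memℓp f).mono' fun x => norm_indicator_le_norm_self f x⟩

@[simp] lemma lp.restrict_apply (S : Set T) (f : ℓ²(T, ℂ)) (x : T) :
    lp.restrict S f x = S.indicator f x := rfl

def lp.pairing (f g : ℓ²(T, ℂ)) : ℂ := ⟪star f, g⟫_ℂ

lemma lp.pairing_comm (f g : ℓ²(T, ℂ)) : lp.pairing f g = lp.pairing g f := by
  simp only [lp.pairing, lp.inner_eq_tsum]
  exact tsum_congr fun x => by simp [lp.star_apply, mul_comm]

lemma exists_eq_smul_of_apply_eq_zero_imp {u : T} {K : Submodule ℂ ℓ²(T, ℂ)} {f : ℓ²(T, ℂ)}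
    (hf : f ∈ K) (hfu : f u ≠ 0) (hK : ∀ g ∈ K, g u = 0 → g = 0) : ∀ g ∈ K, ∃ c : ℂ, g = c • f := by
  intro g hg
  refine ⟨g u / f u, sub_eq_zero.1 (hK _ (K.sub_mem hg (K.smul_mem _ hf)) ?_)⟩
  change g u - g u / f u * f u = 0
  rw [div_mul_cancel₀ _ hfu, sub_self]

variable [DecidableEq T]

lemma lp.pairing_single_right (f : ℓ²(T, ℂ)) (x : T) : lp.pairing f (δ x) = f x := by
  simp [lp.pairing, lp.inner_single_right, lp.star_apply]

lemma lp.ext_clm_single {A B : ℓ²(T, ℂ) →L[ℂ] ℂ} (h : ∀ x, A (δ x) = B (δ x)) : A = B :=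
  lp.ext_continuousLinearMap ENNReal.ofNat_ne_top fun x => ContinuousLinearMap.ext_ring (h x)

lemma lp.apply_eq_tsum (M : ℓ²(T, ℂ) →L[ℂ] ℓ²(T, ℂ)) (f : ℓ²(T, ℂ)) (x : T) :
    M f x = ∑' y, f y * M (δ y) x := by
  have h := (lp.hasSum_single ENNReal.ofNat_ne_top f).mapL
    ((lp.evalCLM ℂ (fun _ : T => ℂ) 2 x).comp M)
  refine h.tsum_eq.symm.trans (tsum_congr fun y => ?_)
  rw [← mul_one (f y), ← smul_eq_mul, lp.single_smul]
  simp [lp.evalCLM]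

section Operator

variable {M Minv : ℓ²(T, ℂ) →L[ℂ] ℓ²(T, ℂ)}

lemma lp.pairing_apply_comm (hsym : ∀ x y, M (δ y) x = M (δ x) y) (f g : ℓ²(T, ℂ)) :
    lp.pairing (M f) g = lp.pairing f (M g) := by
  have hsingle : ∀ x g, lp.pairing (M (δ x)) g = lp.pairing (δ x) (M g) := fun x g =>
    congr($(lp.ext_clm_single (A := innerSL ℂ (star (M (δ x))))
      (B := (innerSL ℂ (star (δ x))).comp M) fun y => by
        change lp.pairing (M (δ x)) (δ y) = lp.pairing (δ x) (M (δ y))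
        rw [lp.pairing_single_right, lp.pairing_comm, lp.pairing_single_right, hsym]) g)
  have h := lp.ext_clm_single (A := (innerSL ℂ (star g)).comp M) (B := innerSL ℂ (star (M g)))
    fun x => by
      change lp.pairing g (M (δ x)) = lp.pairing (M g) (δ x)
      rw [lp.pairing_comm, hsingle, lp.pairing_comm]
  calc lp.pairing (M f) g = lp.pairing g (M f) := lp.pairing_comm _ _
    _ = lp.pairing (M g) f := congr($h f)
    _ = lp.pairing f (M g) := lp.pairing_comm _ _

lemma green_symm (hsym : ∀ x y, M (δ y) x = M (δ x) y) (hMinv : M ∘L Minv = 1) (x y : T) :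
    Minv (δ x) y = Minv (δ y) x := by
  have hM : ∀ f, M (Minv f) = f := fun f => congr($hMinv f)
  calc Minv (δ x) y = lp.pairing (Minv (δ x)) (M (Minv (δ y))) := by
        rw [hM, lp.pairing_single_right]
    _ = lp.pairing (Minv (δ y)) (M (Minv (δ x))) := by
        rw [← lp.pairing_apply_comm hsym, lp.pairing_comm]
    _ = Minv (δ y) x := by rw [hM, lp.pairing_single_right]

lemma SimpleGraph.IsLocalOperator.apply_congr {Γ : SimpleGraph T} (hM : Γ.IsLocalOperator M)
    {f g : ℓ²(T, ℂ)} {x : T} (h : ∀ y, y = x ∨ Γ.Adj x y → f y = g y) : M f x = M g x := by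
  rw [lp.apply_eq_tsum, lp.apply_eq_tsum]
  refine tsum_congr fun y => ?_
  by_cases hy : y = x ∨ Γ.Adj x y
  · rw [h y hy]
  · rw [not_or] at hy
    rw [hM x y (Ne.symm hy.1) hy.2, mul_zero, mul_zero]

variable (M) in
def relKer (S : Set T) (u : T) : Submodule ℂ ℓ²(T, ℂ) where
  carrier := {f | (∀ x, x ∉ S → f x = 0) ∧ ∀ x ∈ S, x ≠ u → M f x = 0}
  add_mem' := by
    rintro f g ⟨hf, hMf⟩ ⟨hg, hMg⟩
    exact ⟨fun x hx => by simp [hf x hx, hg x hx],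
      fun x hx hxu => by simp [hMf x hx hxu, hMg x hx hxu]⟩
  zero_mem' := by simp
  smul_mem' := by
    rintro c f ⟨hf, hMf⟩
    exact ⟨fun x hx => by simp [hf x hx], fun x hx hxu => by simp [hMf x hx hxu]⟩

variable {Γ : SimpleGraph T} {S : Set T} {u : T}

-- Off `S`, the closed neighbourhood of a vertex meets `S` at most in `u`, where `f` vanishes.
lemma eq_smul_inverse_of_mem_relKer (hM : Γ.IsLocalOperator M) (hS : Γ.ExitsOnlyAt S u)
    (hMinv : Minv ∘L M = 1) {f : ℓ²(T, ℂ)} (hf : f ∈ relKer M S u) (hfu : f u = 0) :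
    f = M f u • Minv (δ u) := by
  have hMf : M f = M f u • δ u := by
    ext x
    by_cases hxu : x = u
    · subst hxu; simp
    rw [lp.coeFn_smul, Pi.smul_apply, lp.single_apply_ne _ _ _ hxu, smul_zero]
    by_cases hx : x ∈ S
    · exact hf.2 x hx hxu
    rw [hM.apply_congr (g := 0), map_zero, lp.coeFn_zero, Pi.zero_apply]
    rintro y (rfl | hxy)
    · exact hf.1 y hx
    by_cases hyu : y = u
    · subst hyu; exact hfu
    exact hf.1 y fun hy => hx (hS hy hyu hxy.symm)
  calc f = Minv (M f) := congr($hMinv f).symm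
    _ = Minv (M f u • δ u) := congrArg Minv hMf
    _ = M f u • Minv (δ u) := map_smul _ _ _

lemma restrict_inverse_mem_relKer (hM : Γ.IsLocalOperator M) (hS : Γ.ExitsOnlyAt S u)
    (hMinv : M ∘L Minv = 1) {h : ℓ²(T, ℂ)} (hh : ∀ x ∈ S, x ≠ u → h x = 0) :
    lp.restrict S (Minv h) ∈ relKer M S u := by
  refine ⟨fun x hx => Set.indicator_of_notMem hx _, fun x hx hxu => ?_⟩
  rw [hM.apply_congr (g := Minv h), show M (Minv h) = h from congr($hMinv h), hh x hx hxu]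
  rintro y (rfl | hxy)
  · exact Set.indicator_of_mem hx _
  · exact Set.indicator_of_mem (hS hx hxu hxy) _

end Operator

section Branch

variable {Γ : SimpleGraph T} {M Minv : ℓ²(T, ℂ) →L[ℂ] ℓ²(T, ℂ)} {u v : T}

lemma exists_relKer_branch_eq_span_of_green_ne_zero (hT : Γ.IsTree) (hM : Γ.IsLocalOperator M)
    (hMinv₁ : Minv ∘L M = 1) (hMinv₂ : M ∘L Minv = 1) (huv : Γ.Adj u v)
    (hG : Minv (δ u) u ≠ 0) :
    ∃ f, f ≠ 0 ∧ f ∈ relKer M (Γ.branch u v) u ∧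
      ∀ g ∈ relKer M (Γ.branch u v) u, ∃ c : ℂ, g = c • f := by
  have hB := hT.exitsOnlyAt_branch huv
  have hf := restrict_inverse_mem_relKer hM hB hMinv₂ (h := δ u)
    fun x _ hxu => lp.single_apply_ne _ _ _ hxu
  have hfu : lp.restrict (Γ.branch u v) (Minv (δ u)) u = Minv (δ u) u :=
    Set.indicator_of_mem (Γ.left_mem_branch u v) _
  refine ⟨_, fun h0 => hG (by rw [← hfu, h0]; rfl), hf,
    exists_eq_smul_of_apply_eq_zero_imp hf (hfu ▸ hG) fun g hg hgu => ?_⟩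
  have hg' := eq_smul_inverse_of_mem_relKer hM hB hMinv₁ hg hgu
  have hMg : M g u = 0 := by
    have h := congr($hg' u)
    rw [hgu] at h
    exact (mul_eq_zero.1 h.symm).resolve_right hG
  rw [hg', hMg, zero_smul]

lemma restrict_green_eq_smul (hT : Γ.IsTree) (hM : Γ.IsLocalOperator M)
    (hMinv₁ : Minv ∘L M = 1) (hMinv₂ : M ∘L Minv = 1) (huv : Γ.Adj u v)
    (hG : Minv (δ u) u = 0) :
    lp.restrict (insert u (Γ.branch u v)ᶜ) (Minv (δ u)) =
      M (lp.restrict (insert u (Γ.branch u v)ᶜ) (Minv (δ u))) u • Minv (δ u) := by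
  have hS := hT.exitsOnlyAt_insert_compl_branch huv
  refine eq_smul_inverse_of_mem_relKer hM hS hMinv₁
    (restrict_inverse_mem_relKer hM hS hMinv₂ fun x _ hxu => lp.single_apply_ne _ _ _ hxu) ?_
  rw [lp.restrict_apply, Set.indicator_of_mem (Set.mem_insert u _), hG]

lemma green_eq_zero_on_branch (hT : Γ.IsTree) (hM : Γ.IsLocalOperator M)
    (hMinv₁ : Minv ∘L M = 1) (hMinv₂ : M ∘L Minv = 1) (huv : Γ.Adj u v)
    (hGu : Minv (δ u) u = 0) (hGv : Minv (δ u) v = 0) :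
    ∀ x ∈ Γ.branch u v, Minv (δ u) x = 0 := by
  set S := insert u (Γ.branch u v)ᶜ
  have hv : v ∉ S := SimpleGraph.right_notMem_insert_compl_branch huv
  have hcoef : M (lp.restrict S (Minv (δ u))) u = 1 := by
    rw [hM.apply_congr (g := Minv (δ u)), show M (Minv (δ u)) = δ u from congr($hMinv₂ (δ u)),
      lp.single_apply_self]
    rintro y (rfl | huy)
    · rw [lp.restrict_apply, Set.indicator_of_mem (Set.mem_insert _ _)]
    by_cases hy : y ∈ Γ.branch u v
    · rw [hT.eq_of_adj_of_mem_branch huv huy hy, lp.restrict_apply, Set.indicator_of_notMem hv,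
        hGv]
    · exact Set.indicator_of_mem (Set.mem_insert_of_mem u hy) _
  intro x hx
  by_cases hxu : x = u
  · rw [hxu, hGu]
  have h := congr($(restrict_green_eq_smul hT hM hMinv₁ hMinv₂ huv hGu) x)
  rw [hcoef, one_smul, lp.restrict_apply, Set.indicator_of_notMem (by simp [hxu, hx])] at h
  exact h.symm

lemma green_mem_relKer_branch (hT : Γ.IsTree) (hM : Γ.IsLocalOperator M)
    (hMinv₁ : Minv ∘L M = 1) (hMinv₂ : M ∘L Minv = 1) (huv : Γ.Adj u v)
    (hGu : Minv (δ u) u = 0) (hGv : Minv (δ u) v ≠ 0) :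
    Minv (δ u) ∈ relKer M (Γ.branch u v) u := by
  set S := insert u (Γ.branch u v)ᶜ
  have h := restrict_green_eq_smul hT hM hMinv₁ hMinv₂ huv hGu
  have hcoef : M (lp.restrict S (Minv (δ u))) u = 0 := by
    have hv := congr($h v)
    rw [lp.restrict_apply, Set.indicator_of_notMem
      (SimpleGraph.right_notMem_insert_compl_branch huv)] at hv
    exact (mul_eq_zero.1 hv.symm).resolve_right hGv
  rw [hcoef, zero_smul] at h
  refine ⟨fun x hx => ?_, fun x _ hxu => ?_⟩
  · have hx' := congr($h x)
    rwa [lp.restrict_apply, Set.indicator_of_mem (Set.mem_insert_of_mem u hx), lp.coeFn_zero,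
      Pi.zero_apply] at hx'
  · rw [show M (Minv (δ u)) = δ u from congr($hMinv₂ (δ u)), lp.single_apply_ne _ _ _ hxu]

lemma exists_relKer_branch_eq_span_of_green_eq_zero (hT : Γ.IsTree) (hM : Γ.IsLocalOperator M)
    (hsym : ∀ x y, M (δ y) x = M (δ x) y) (hMinv₁ : Minv ∘L M = 1) (hMinv₂ : M ∘L Minv = 1)
    (huv : Γ.Adj u v) (hGu : Minv (δ u) u = 0) (hGv : Minv (δ u) v = 0) :
    ∃ f, f ≠ 0 ∧ f ∈ relKer M (Γ.branch u v) u ∧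
      ∀ g ∈ relKer M (Γ.branch u v) u, ∃ c : ℂ, g = c • f := by
  have hB := hT.exitsOnlyAt_branch huv
  have hG := green_eq_zero_on_branch hT hM hMinv₁ hMinv₂ huv hGu hGv
  obtain ⟨y, hy⟩ : ∃ y, Minv (δ u) y ≠ 0 := by
    by_contra! h
    have h1 : M (Minv (δ u)) u = 1 := by
      rw [show M (Minv (δ u)) = δ u from congr($hMinv₂ (δ u)), lp.single_apply_self]
    rw [show Minv (δ u) = 0 from lp.ext (funext h), map_zero] at h1
    exact zero_ne_one h1
  have hyB : y ∉ Γ.branch u v := fun h => hy (hG y h)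
  have hf := restrict_inverse_mem_relKer hM hB hMinv₂ (h := δ y)
    fun x hx _ => lp.single_apply_ne _ _ _ fun hxy => hyB (hxy ▸ hx)
  have hfu : lp.restrict (Γ.branch u v) (Minv (δ y)) u ≠ 0 := by
    rwa [lp.restrict_apply, Set.indicator_of_mem (Γ.left_mem_branch u v), green_symm hsym hMinv₂]
  refine ⟨_, fun h0 => hfu (by rw [h0]; rfl), hf,
    exists_eq_smul_of_apply_eq_zero_imp hf hfu fun g hg hgu => ?_⟩
  have hg' := eq_smul_inverse_of_mem_relKer hM hB hMinv₁ hg hgu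
  ext x
  by_cases hx : x ∈ Γ.branch u v
  · rw [hg', lp.coeFn_smul, Pi.smul_apply, hG x hx, smul_zero]; rfl
  · exact hg.1 x hx

end Branch

end

/-- Let `T` be a locally finite tree, `M` a connected local symmetric
bounded invertible operator on `ℓ²(V(T))` with Green function `G`, and `e = (u,v)` a
directed edge. With `ker_e` the space of `ℓ²` functions supported on the branch `T_e`
(the component of `v` in `T - e`, together with `u`) such that `Mf` vanishes on
`T_e \ {u}`, and the relative null-kernel its subspace of functions vanishing at `u`:
(i) if `G(u,u) ≠ 0` then `ker_e` is one-dimensional; (ii) if `G(u,u) = G(u,v) = 0` then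
`ker_e` is one-dimensional; (iii) if `G(u,u) = 0` and `G(u,v) ≠ 0` then the relative
null-kernel is one-dimensional. -/
theorem relative_kernel_dimensions
    {T : Type} [DecidableEq T] (Γ : SimpleGraph T) (hT : Γ.IsTree)
    [∀ v : T, Fintype (Γ.neighborSet v)]
    (M Minv : lp (fun _ : T => ℂ) 2 →L[ℂ] lp (fun _ : T => ℂ) 2)
    (hMinv₁ : Minv ∘L M = 1) (hMinv₂ : M ∘L Minv = 1)
    -- symmetric: entries satisfy `M_{xy} = M_{yx}`
    (hsym : ∀ x y : T, M (lp.single 2 y (1 : ℂ)) x = M (lp.single 2 x (1 : ℂ)) y)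
    -- local and connected: off-diagonal entries are nonzero exactly on edges
    (hloc : ∀ x y : T, x ≠ y → (M (lp.single 2 y (1 : ℂ)) x ≠ 0 ↔ Γ.Adj x y))
    (u v : T) (huv : Γ.Adj u v) :
    -- `branch` is the vertex set of `T_e`: `u` together with the component of `v` in `T - uv`
    (let branch : Set T := {w | w = u ∨ Γ.dist w u = Γ.dist w v + 1}
     let inKer : lp (fun _ : T => ℂ) 2 → Prop := fun f =>
       (∀ x, x ∉ branch → f x = 0) ∧ (∀ w ∈ branch, w ≠ u → M f w = 0)
     let green : T → T → ℂ := fun x y => Minv (lp.single 2 x (1 : ℂ)) y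
     -- (i)
     (green u u ≠ 0 →
       ∃ f, f ≠ 0 ∧ inKer f ∧ ∀ g, inKer g → ∃ c : ℂ, g = c • f) ∧
     -- (ii)
     (green u u = 0 → green u v = 0 →
       ∃ f, f ≠ 0 ∧ inKer f ∧ ∀ g, inKer g → ∃ c : ℂ, g = c • f) ∧
     -- (iii)
     (green u u = 0 → green u v ≠ 0 →
       ∃ f, f ≠ 0 ∧ (inKer f ∧ f u = 0) ∧
         ∀ g, inKer g → g u = 0 → ∃ c : ℂ, g = c • f)) := by
  have hM : Γ.IsLocalOperator M := fun x y hxy hadj =>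
    not_not.1 fun h => hadj ((hloc x y hxy).1 h)
  refine ⟨exists_relKer_branch_eq_span_of_green_ne_zero hT hM hMinv₁ hMinv₂ huv,
    exists_relKer_branch_eq_span_of_green_eq_zero hT hM hsym hMinv₁ hMinv₂ huv,
    fun hGu hGv => ⟨Minv (δ u), ne_of_apply_ne (fun f : ℓ²(T, ℂ) => f v) hGv,
      ⟨green_mem_relKer_branch hT hM hMinv₁ hMinv₂ huv hGu hGv, hGu⟩,
      fun g hg hgu =>
        ⟨_, eq_smul_inverse_of_mem_relKer hM (hT.exitsOnlyAt_branch huv) hMinv₁ hg hgu⟩⟩⟩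
end
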